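/- arXiv:1307.0477 — 7 statements merged into one kernel-verified Lean document; each statement's English description precedes it below -/
import Mathlib

section
/- Let Ω be an open subset of ℝⁿ, let f be a smooth real-valued function on Ω, let k > 2 be a real number, and let b be a smooth positive function on Ω with Δ_f(b^{2−k}) = 0 on Ω. Then for every real number β, Δ_f(b^β) = β(β+k−2)·b^{β−2}·|∇b|² on Ω; in particular Δ_f(b²) = 2k·|∇b|². -/
open Real RealInnerProductSpace

variable {n : ℕ}

/-- The Hessian of `u` at `x` applied to vectors `v, w`. -/
noncomputable def hess (u : EuclideanSpace ℝ (Fin n) → ℝ)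
    (x v w : EuclideanSpace ℝ (Fin n)) : ℝ :=
  fderiv ℝ (fderiv ℝ u) x v w

/-- The Euclidean Laplacian of `u` at `x`. -/
noncomputable def lap (u : EuclideanSpace ℝ (Fin n) → ℝ)
    (x : EuclideanSpace ℝ (Fin n)) : ℝ :=
  ∑ i, hess u x (EuclideanSpace.single i 1) (EuclideanSpace.single i 1)

/-- The weighted (`f`-)Laplacian `Δ_f u = Δu − ⟨∇f, ∇u⟩`. -/
noncomputable def lapf (f u : EuclideanSpace ℝ (Fin n) → ℝ)
    (x : EuclideanSpace ℝ (Fin n)) : ℝ :=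
  lap u x - ⟪gradient f x, gradient u x⟫

/-- The squared Frobenius norm of the Hessian of `u` at `x`. -/
noncomputable def hessNormSq (u : EuclideanSpace ℝ (Fin n) → ℝ)
    (x : EuclideanSpace ℝ (Fin n)) : ℝ :=
  ∑ i, ∑ j, (hess u x (EuclideanSpace.single i 1) (EuclideanSpace.single j 1)) ^ 2

section aux

variable {Ω : Set (EuclideanSpace ℝ (Fin n))} {b : EuclideanSpace ℝ (Fin n) → ℝ}

lemma aux_hasFDerivAt (hΩ : IsOpen Ω) (hb : ContDiffOn ℝ (⊤ : ℕ∞) b Ω)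
    (hbpos : ∀ x ∈ Ω, 0 < b x) (β : ℝ) {x} (hx : x ∈ Ω) :
    HasFDerivAt (fun y => b y ^ β) ((β * b x ^ (β - 1)) • fderiv ℝ b x) x := by
  have hd : DifferentiableAt ℝ b x :=
    (hb.contDiffAt (hΩ.mem_nhds hx)).differentiableAt (by simp)
  exact (Real.hasDerivAt_rpow_const (p := β)
    (Or.inl (hbpos x hx).ne')).comp_hasFDerivAt x hd.hasFDerivAt

lemma aux_grad_inner (hΩ : IsOpen Ω) (hb : ContDiffOn ℝ (⊤ : ℕ∞) b Ω)
    (hbpos : ∀ x ∈ Ω, 0 < b x) (β : ℝ) {x} (hx : x ∈ Ω)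
    (v : EuclideanSpace ℝ (Fin n)) :
    ⟪gradient (fun y => b y ^ β) x, v⟫ = (β * b x ^ (β - 1)) * ⟪gradient b x, v⟫ := by
  have h1 := (aux_hasFDerivAt hΩ hb hbpos β hx).fderiv
  have hd : DifferentiableAt ℝ b x :=
    (hb.contDiffAt (hΩ.mem_nhds hx)).differentiableAt (by simp)
  rw [gradient, InnerProductSpace.toDual_symm_apply, h1, gradient,
    InnerProductSpace.toDual_symm_apply]
  simp

lemma aux_hess (hΩ : IsOpen Ω) (hb : ContDiffOn ℝ (⊤ : ℕ∞) b Ω)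
    (hbpos : ∀ x ∈ Ω, 0 < b x) (β : ℝ) {x} (hx : x ∈ Ω)
    (v w : EuclideanSpace ℝ (Fin n)) :
    hess (fun y => b y ^ β) x v w =
      (β * b x ^ (β - 1)) * hess b x v w +
        (β * ((β - 1) * b x ^ (β - 2))) * (fderiv ℝ b x v) * (fderiv ℝ b x w) := by
  have hd : DifferentiableAt ℝ b x :=
    (hb.contDiffAt (hΩ.mem_nhds hx)).differentiableAt (by simp)
  set c : EuclideanSpace ℝ (Fin n) → ℝ := fun y => β * b y ^ (β - 1) with hc_def
  set g : EuclideanSpace ℝ (Fin n) → (EuclideanSpace ℝ (Fin n) →L[ℝ] ℝ) :=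
    fun y => fderiv ℝ b y with hg_def
  have hc : HasFDerivAt c ((β * ((β - 1) * b x ^ (β - 2))) • fderiv ℝ b x) x := by
    have h1 : HasDerivAt (fun t : ℝ => β * t ^ (β - 1))
        (β * ((β - 1) * b x ^ (β - 1 - 1))) (b x) :=
      (Real.hasDerivAt_rpow_const (p := β - 1) (Or.inl (hbpos x hx).ne')).const_mul β
    have h2 := h1.comp_hasFDerivAt x hd.hasFDerivAt
    have : β - 1 - 1 = β - 2 := by ring
    rw [this] at h2
    exact h2
  have hg : HasFDerivAt g (fderiv ℝ (fderiv ℝ b) x) x := by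
    have : ContDiffAt ℝ 1 (fderiv ℝ b) x :=
      (hb.contDiffAt (hΩ.mem_nhds hx)).fderiv_right (WithTop.coe_le_coe.mpr le_top)
    exact (this.differentiableAt one_ne_zero).hasFDerivAt
  have hF := hc.smul hg
  have hEq : fderiv ℝ (fun y => b y ^ β) =ᶠ[nhds x] fun y => c y • g y := by
    filter_upwards [hΩ.mem_nhds hx] with y hy
    exact (aux_hasFDerivAt hΩ hb hbpos β hy).fderiv
  have h3 : fderiv ℝ (fderiv ℝ (fun y => b y ^ β)) x = fderiv ℝ (fun y => c y • g y) x :=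
    hEq.fderiv_eq
  rw [hess, h3, (show HasFDerivAt (fun y => c y • g y) _ x from hF).fderiv]
  simp only [ContinuousLinearMap.add_apply, ContinuousLinearMap.smul_apply,
    ContinuousLinearMap.smulRight_apply, smul_eq_mul]
  rfl

lemma aux_normsq {x : EuclideanSpace ℝ (Fin n)} (hd : DifferentiableAt ℝ b x) :
    ∑ i, (fderiv ℝ b x (EuclideanSpace.single i 1)) ^ 2 = ‖gradient b x‖ ^ 2 := by
  have h : ∀ v, fderiv ℝ b x v = ⟪gradient b x, v⟫ := by
    intro v
    rw [gradient, InnerProductSpace.toDual_symm_apply]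
  rw [← real_inner_self_eq_norm_sq]
  simp only [h]
  rw [PiLp.inner_apply]
  apply Finset.sum_congr rfl
  intro i _
  rw [EuclideanSpace.inner_single_right]
  simp [sq]

lemma aux_master {f : EuclideanSpace ℝ (Fin n) → ℝ} (hΩ : IsOpen Ω)
    (hb : ContDiffOn ℝ (⊤ : ℕ∞) b Ω) (hbpos : ∀ x ∈ Ω, 0 < b x) (β : ℝ) {x} (hx : x ∈ Ω) :
    lapf f (fun y => b y ^ β) x =
      (β * b x ^ (β - 1)) * lapf f b x +
        (β * ((β - 1) * b x ^ (β - 2))) * ‖gradient b x‖ ^ 2 := by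
  have hd : DifferentiableAt ℝ b x :=
    (hb.contDiffAt (hΩ.mem_nhds hx)).differentiableAt (by simp)
  have hlap : lap (fun y => b y ^ β) x =
      (β * b x ^ (β - 1)) * lap b x +
        (β * ((β - 1) * b x ^ (β - 2))) * ‖gradient b x‖ ^ 2 := by
    rw [lap, lap, ← aux_normsq hd]
    rw [Finset.mul_sum, Finset.mul_sum, ← Finset.sum_add_distrib]
    apply Finset.sum_congr rfl
    intro i _
    rw [aux_hess hΩ hb hbpos β hx]
    ring
  have hinner : ⟪gradient f x, gradient (fun y => b y ^ β) x⟫ =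
      (β * b x ^ (β - 1)) * ⟪gradient f x, gradient b x⟫ := by
    rw [real_inner_comm, aux_grad_inner hΩ hb hbpos β hx, real_inner_comm]
  rw [lapf, lapf, hlap, hinner]
  ring

end aux

theorem stmt_2 (Ω : Set (EuclideanSpace ℝ (Fin n))) (hΩ : IsOpen Ω)
    (f b : EuclideanSpace ℝ (Fin n) → ℝ)
    (hf : ContDiffOn ℝ (⊤ : ℕ∞) f Ω) (hb : ContDiffOn ℝ (⊤ : ℕ∞) b Ω)
    (hbpos : ∀ x ∈ Ω, 0 < b x) (k : ℝ) (hk : 2 < k)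
    (hharm : ∀ x ∈ Ω, lapf f (fun y => b y ^ (2 - k)) x = 0) :
    (∀ β : ℝ, ∀ x ∈ Ω,
        lapf f (fun y => b y ^ β) x =
          β * (β + k - 2) * b x ^ (β - 2) * ‖gradient b x‖ ^ 2) ∧
    (∀ x ∈ Ω,
        lapf f (fun y => b y ^ (2 : ℝ)) x = 2 * k * ‖gradient b x‖ ^ 2) := by
  have main : ∀ β : ℝ, ∀ x ∈ Ω,
      lapf f (fun y => b y ^ β) x =
        β * (β + k - 2) * b x ^ (β - 2) * ‖gradient b x‖ ^ 2 := by
    intro β x hx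
    have hbx := hbpos x hx
    -- first derive lapf f b x from harmonicity
    have h0 := hharm x hx
    rw [aux_master hΩ hb hbpos (2 - k) hx] at h0
    have hD : lapf f b x = (k - 1) * b x ^ (-1 : ℝ) * ‖gradient b x‖ ^ 2 := by
      have hsplit : b x ^ (2 - k - 2) = b x ^ (2 - k - 1) * b x ^ (-1 : ℝ) := by
        rw [← Real.rpow_add hbx]; ring_nf
      rw [hsplit] at h0
      have h1 : (2 - k) * b x ^ (2 - k - 1) *
          (lapf f b x + (2 - k - 1) * b x ^ (-1 : ℝ) * ‖gradient b x‖ ^ 2) = 0 := by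
        linarith [h0]
      have h2 : lapf f b x + (2 - k - 1) * b x ^ (-1 : ℝ) * ‖gradient b x‖ ^ 2 = 0 := by
        have hne2 : (2 - k) * b x ^ (2 - k - 1) ≠ 0 := by
          apply mul_ne_zero (by linarith)
          exact ne_of_gt (Real.rpow_pos_of_pos hbx _)
        exact (mul_eq_zero.mp h1).resolve_left hne2
      have : lapf f b x = -((2 - k - 1) * b x ^ (-1 : ℝ) * ‖gradient b x‖ ^ 2) := by
        linarith
      rw [this]; ring
    rw [aux_master hΩ hb hbpos β hx, hD]
    have hsplit : b x ^ (β - 1) * b x ^ (-1 : ℝ) = b x ^ (β - 2) := by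
      rw [← Real.rpow_add hbx]; ring_nf
    calc β * b x ^ (β - 1) * ((k - 1) * b x ^ (-1 : ℝ) * ‖gradient b x‖ ^ 2) +
          β * ((β - 1) * b x ^ (β - 2)) * ‖gradient b x‖ ^ 2
        = β * (k - 1) * (b x ^ (β - 1) * b x ^ (-1 : ℝ)) * ‖gradient b x‖ ^ 2 +
          β * (β - 1) * b x ^ (β - 2) * ‖gradient b x‖ ^ 2 := by ring
      _ = β * (β + k - 2) * b x ^ (β - 2) * ‖gradient b x‖ ^ 2 := by
          rw [hsplit]; ring
  refine ⟨main, fun x hx => ?_⟩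
  have := main 2 x hx
  rw [this, show (2 : ℝ) + k - 2 = k by ring, show (2 : ℝ) - 2 = 0 by ring,
    Real.rpow_zero]
  ring
end

section
/- Let Ω be an open subset of ℝⁿ, let f be a smooth real-valued function on Ω, let k > 2 be a real number, and let b be a smooth positive function on Ω with Δ_f(b^{2−k}) = 0 on Ω. Then at every point of Ω, 2b²·Δ_f(|∇b|²) = |Hess(b²)|² + Hess f(∇(b²), ∇(b²)) + (2k−4)·⟨∇(b²), ∇(|∇b|²)⟩ − 4k·|∇b|⁴. -/
open Real RealInnerProductSpace
open scoped ContDiff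

variable {n : ℕ}

namespace S5

variable {Ω : Set (EuclideanSpace ℝ (Fin n))} {φ ψ b f : EuclideanSpace ℝ (Fin n) → ℝ}
  {x : EuclideanSpace ℝ (Fin n)}

lemma inner_grad (φ : EuclideanSpace ℝ (Fin n) → ℝ) (x v : EuclideanSpace ℝ (Fin n)) :
    ⟪gradient φ x, v⟫ = fderiv ℝ φ x v :=
  InnerProductSpace.toDual_symm_apply

lemma grad_apply (φ : EuclideanSpace ℝ (Fin n) → ℝ) (x : EuclideanSpace ℝ (Fin n)) (i : Fin n) :
    gradient φ x i = fderiv ℝ φ x (EuclideanSpace.single i 1) := by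
  rw [← inner_grad, EuclideanSpace.inner_single_right]
  simp [EuclideanSpace.inner_single_right]

lemma normsq_eq (v : EuclideanSpace ℝ (Fin n)) : ‖v‖^2 = ∑ i, (v i)^2 := by
  rw [EuclideanSpace.norm_eq, Real.sq_sqrt (by positivity)]
  simp [sq_abs]

lemma basis_expand (v : EuclideanSpace ℝ (Fin n)) :
    v = ∑ i, v i • EuclideanSpace.single i (1:ℝ) := by
  have := (EuclideanSpace.basisFun (Fin n) ℝ).sum_repr v
  simpa [EuclideanSpace.basisFun_apply, EuclideanSpace.basisFun_repr] using this.symm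

lemma inner_eval (u v : EuclideanSpace ℝ (Fin n)) : ⟪u, v⟫ = ∑ i, u i * v i := by
  simp [PiLp.inner_apply, mul_comm]

lemma grad_expand (φ : EuclideanSpace ℝ (Fin n) → ℝ) (x : EuclideanSpace ℝ (Fin n)) :
    gradient φ x = ∑ i, fderiv ℝ φ x (EuclideanSpace.single i 1) • EuclideanSpace.single i (1:ℝ) := by
  conv_lhs => rw [basis_expand (gradient φ x)]
  simp [grad_apply]

lemma sm_der (hΩ : IsOpen Ω) (hφ : ContDiffOn ℝ ∞ φ Ω) (v : EuclideanSpace ℝ (Fin n)) :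
    ContDiffOn ℝ ∞ (fun y => fderiv ℝ φ y v) Ω :=
  (hφ.fderiv_of_isOpen hΩ (by simp)).clm_apply contDiffOn_const

lemma sm_diffAt (hΩ : IsOpen Ω) (hφ : ContDiffOn ℝ ∞ φ Ω) (hx : x ∈ Ω) :
    DifferentiableAt ℝ φ x :=
  (hφ.contDiffAt (hΩ.mem_nhds hx)).differentiableAt (by simp)

lemma fderiv_der (hΩ : IsOpen Ω) (hφ : ContDiffOn ℝ ∞ φ Ω) (hx : x ∈ Ω)
    (v w : EuclideanSpace ℝ (Fin n)) :
    fderiv ℝ (fun y => fderiv ℝ φ y v) x w = hess φ x w v := by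
  have hd : DifferentiableAt ℝ (fderiv ℝ φ) x :=
    ((hφ.contDiffAt (hΩ.mem_nhds hx)).fderiv_right (m := 1) (WithTop.coe_le_coe.mpr le_top)).differentiableAt
      (by simp : (1:WithTop ℕ∞) ≠ 0)
  rw [fderiv_clm_apply hd (differentiableAt_const v)]
  simp [hess]

lemma hess_symm (hΩ : IsOpen Ω) (hφ : ContDiffOn ℝ ∞ φ Ω) (hx : x ∈ Ω)
    (v w : EuclideanSpace ℝ (Fin n)) : hess φ x v w = hess φ x w v :=
  ((hφ.contDiffAt (hΩ.mem_nhds hx)).isSymmSndFDerivAt (by simp; exact WithTop.coe_le_coe.mpr le_top)).eq v w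

lemma hess_sum_left (φ : EuclideanSpace ℝ (Fin n) → ℝ) (x w : EuclideanSpace ℝ (Fin n))
    (c : Fin n → ℝ) (u : Fin n → EuclideanSpace ℝ (Fin n)) :
    hess φ x (∑ i, c i • u i) w = ∑ i, c i * hess φ x (u i) w := by
  simp [hess, map_sum, ContinuousLinearMap.sum_apply]

lemma hess_sum_right (φ : EuclideanSpace ℝ (Fin n) → ℝ) (x v : EuclideanSpace ℝ (Fin n))
    (c : Fin n → ℝ) (u : Fin n → EuclideanSpace ℝ (Fin n)) :
    hess φ x v (∑ i, c i • u i) = ∑ i, c i * hess φ x v (u i) := by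
  simp [hess, map_sum]

lemma hess_smul_left (φ : EuclideanSpace ℝ (Fin n) → ℝ) (x v w : EuclideanSpace ℝ (Fin n)) (c : ℝ) :
    hess φ x (c • v) w = c * hess φ x v w := by
  simp [hess, map_smul]

lemma hess_smul_right (φ : EuclideanSpace ℝ (Fin n) → ℝ) (x v w : EuclideanSpace ℝ (Fin n)) (c : ℝ) :
    hess φ x v (c • w) = c * hess φ x v w := by
  simp [hess, map_smul]

lemma fderiv_smul_arg (φ : EuclideanSpace ℝ (Fin n) → ℝ) (x v : EuclideanSpace ℝ (Fin n)) (c : ℝ) :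
    fderiv ℝ φ x (c • v) = c * fderiv ℝ φ x v := by
  simp

lemma fderiv_sum_arg (φ : EuclideanSpace ℝ (Fin n) → ℝ) (x : EuclideanSpace ℝ (Fin n))
    (c : Fin n → ℝ) (u : Fin n → EuclideanSpace ℝ (Fin n)) :
    fderiv ℝ φ x (∑ i, c i • u i) = ∑ i, c i * fderiv ℝ φ x (u i) := by
  simp [map_sum]

lemma fderiv_congr_on (hΩ : IsOpen Ω) (hx : x ∈ Ω) (h : ∀ y ∈ Ω, φ y = ψ y) :
    fderiv ℝ φ x = fderiv ℝ ψ x :=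
  Filter.EventuallyEq.fderiv_eq (Filter.eventually_of_mem (hΩ.mem_nhds hx) h)

lemma fderiv_mul_apply (hφ : DifferentiableAt ℝ φ x) (hψ : DifferentiableAt ℝ ψ x)
    (v : EuclideanSpace ℝ (Fin n)) :
    fderiv ℝ (fun y => φ y * ψ y) x v = fderiv ℝ φ x v * ψ x + φ x * fderiv ℝ ψ x v := by
  rw [fderiv_fun_mul hφ hψ]
  simp
  ring

lemma fderiv_finsum_apply (A : Fin n → EuclideanSpace ℝ (Fin n) → ℝ)
    (h : ∀ i, DifferentiableAt ℝ (A i) x) (v : EuclideanSpace ℝ (Fin n)) :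
    fderiv ℝ (fun y => ∑ i, A i y) x v = ∑ i, fderiv ℝ (A i) x v := by
  rw [fderiv_fun_sum (fun i _ => h i)]
  simp

lemma fderiv_sq (hφ : DifferentiableAt ℝ φ x) (v : EuclideanSpace ℝ (Fin n)) :
    fderiv ℝ (fun y => φ y ^ 2) x v = 2 * φ x * fderiv ℝ φ x v := by
  have : (fun y => φ y ^ 2) = fun y => φ y * φ y := by funext y; ring
  rw [this, fderiv_mul_apply hφ hφ]
  ring

lemma fderiv_rpow (hφ : DifferentiableAt ℝ φ x) (hpos : φ x ≠ 0) (p : ℝ)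
    (v : EuclideanSpace ℝ (Fin n)) :
    fderiv ℝ (fun y => φ y ^ p) x v = p * φ x ^ (p - 1) * fderiv ℝ φ x v := by
  have := (hφ.hasFDerivAt.rpow_const (p := p) (Or.inl hpos)).fderiv
  rw [this]
  simp


section
variable (hΩ : IsOpen Ω) (hb : ContDiffOn ℝ ∞ b Ω)

lemma w_eq (b : EuclideanSpace ℝ (Fin n) → ℝ) :
    (fun y => ‖gradient b y‖ ^ 2)
      = fun y => ∑ i, (fderiv ℝ b y (EuclideanSpace.single i 1))^2 := by
  funext y
  rw [normsq_eq]
  exact Finset.sum_congr rfl fun i _ => by rw [grad_apply]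

include hΩ hb

lemma sm_sumsq :
    ContDiffOn ℝ ∞ (fun y => ∑ i, (fderiv ℝ b y (EuclideanSpace.single i 1))^2) Ω :=
  ContDiffOn.sum fun i _ => (sm_der hΩ hb _).pow 2

lemma d_sumsq (hx : x ∈ Ω) (v : EuclideanSpace ℝ (Fin n)) :
    fderiv ℝ (fun y => ∑ i, (fderiv ℝ b y (EuclideanSpace.single i 1))^2) x v
      = ∑ i, 2 * fderiv ℝ b x (EuclideanSpace.single i 1) * hess b x v (EuclideanSpace.single i 1) := by
  rw [fderiv_finsum_apply _ (fun i => (sm_diffAt hΩ (sm_der hΩ hb _) hx).fun_pow 2) v]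
  exact Finset.sum_congr rfl fun i _ => by
    rw [fderiv_sq (sm_diffAt hΩ (sm_der hΩ hb _) hx), fderiv_der hΩ hb hx]

lemma d_normsq (hx : x ∈ Ω) (v : EuclideanSpace ℝ (Fin n)) :
    fderiv ℝ (fun y => ‖gradient b y‖^2) x v
      = ∑ i, 2 * fderiv ℝ b x (EuclideanSpace.single i 1) * hess b x v (EuclideanSpace.single i 1) := by
  rw [w_eq]; exact d_sumsq hΩ hb hx v

lemma hess_sq (hx : x ∈ Ω) (v w : EuclideanSpace ℝ (Fin n)) :
    hess (fun y => b y ^ 2) x v w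
      = 2 * fderiv ℝ b x v * fderiv ℝ b x w + 2 * b x * hess b x v w := by
  have hu : ContDiffOn ℝ ∞ (fun y => b y ^ 2) Ω := hb.pow 2
  rw [← fderiv_der hΩ hu hx w v]
  have hcg : fderiv ℝ (fun y => fderiv ℝ (fun z => b z ^ 2) y w) x
      = fderiv ℝ (fun y => 2 * (b y * fderiv ℝ b y w)) x := by
    refine fderiv_congr_on hΩ hx fun y hy => ?_
    rw [fderiv_sq (sm_diffAt hΩ hb hy)]; ring
  rw [hcg, fderiv_const_mul ((sm_diffAt hΩ hb hx).fun_mul (sm_diffAt hΩ (sm_der hΩ hb w) hx))]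
  simp only [ContinuousLinearMap.smul_apply, smul_eq_mul]
  rw [fderiv_mul_apply (sm_diffAt hΩ hb hx) (sm_diffAt hΩ (sm_der hΩ hb w) hx),
    fderiv_der hΩ hb hx]
  ring

lemma grad_sq (hx : x ∈ Ω) :
    gradient (fun y => b y ^ 2) x = (2 * b x) • gradient b x := by
  have hclm : fderiv ℝ (fun y => b y ^ 2) x = (2 * b x) • fderiv ℝ b x := by
    ext v
    rw [fderiv_sq (sm_diffAt hΩ hb hx) v]
    simp [mul_assoc]
  rw [gradient, gradient, hclm, map_smul]

lemma hess_rpow (hbpos : ∀ y ∈ Ω, 0 < b y) (p : ℝ) (hx : x ∈ Ω)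
    (v w : EuclideanSpace ℝ (Fin n)) :
    hess (fun y => b y ^ p) x v w
      = p * ((p-1) * b x ^ (p-1-1) * fderiv ℝ b x v * fderiv ℝ b x w
          + b x ^ (p-1) * hess b x v w) := by
  have hu : ContDiffOn ℝ ∞ (fun y => b y ^ p) Ω :=
    hb.rpow_const_of_ne fun y hy => (hbpos y hy).ne'
  rw [← fderiv_der hΩ hu hx w v]
  have hcg : fderiv ℝ (fun y => fderiv ℝ (fun z => b z ^ p) y w) x
      = fderiv ℝ (fun y => p * (b y ^ (p-1) * fderiv ℝ b y w)) x := by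
    refine fderiv_congr_on hΩ hx fun y hy => ?_
    rw [fderiv_rpow (sm_diffAt hΩ hb hy) (hbpos y hy).ne' p]; ring
  have hd1 : DifferentiableAt ℝ (fun y => b y ^ (p-1)) x :=
    (sm_diffAt hΩ hb hx).rpow_const (Or.inl (hbpos x hx).ne')
  rw [hcg, fderiv_const_mul (hd1.fun_mul (sm_diffAt hΩ (sm_der hΩ hb w) hx))]
  simp only [ContinuousLinearMap.smul_apply, smul_eq_mul]
  rw [fderiv_mul_apply hd1 (sm_diffAt hΩ (sm_der hΩ hb w) hx),
    fderiv_der hΩ hb hx, fderiv_rpow (sm_diffAt hΩ hb hx) (hbpos x hx).ne' (p-1)]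


lemma hess_der_swap (hx : x ∈ Ω) (i j : Fin n) (w : EuclideanSpace ℝ (Fin n)) :
    hess (fun z => fderiv ℝ b z (EuclideanSpace.single i 1)) x (EuclideanSpace.single j 1) w
      = hess (fun z => fderiv ℝ b z (EuclideanSpace.single j 1)) x (EuclideanSpace.single i 1) w := by
  have hgi : ContDiffOn ℝ ∞ (fun z => fderiv ℝ b z (EuclideanSpace.single i 1)) Ω :=
    sm_der hΩ hb _
  have hgj : ContDiffOn ℝ ∞ (fun z => fderiv ℝ b z (EuclideanSpace.single j 1)) Ω :=
    sm_der hΩ hb _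
  rw [hess_symm hΩ hgi hx, ← fderiv_der hΩ hgi hx, hess_symm hΩ hgj hx, ← fderiv_der hΩ hgj hx]
  congr 1
  refine fderiv_congr_on hΩ hx fun y hy => ?_
  rw [fderiv_der hΩ hb hy, fderiv_der hΩ hb hy, hess_symm hΩ hb hy]

lemma constraint {f : EuclideanSpace ℝ (Fin n) → ℝ} (hf : ContDiffOn ℝ ∞ f Ω)
    (hbpos : ∀ y ∈ Ω, 0 < b y) {k : ℝ} (hk : 2 < k)
    (hharm : ∀ y ∈ Ω, lapf f (fun z => b z ^ (2 - k)) y = 0) (hx : x ∈ Ω) :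
    b x * ((∑ i, hess b x (EuclideanSpace.single i 1) (EuclideanSpace.single i 1))
        - ⟪gradient f x, gradient b x⟫)
      = (k-1) * ∑ i, (fderiv ℝ b x (EuclideanSpace.single i 1))^2 := by
  have hbx := hbpos x hx
  have h0 := hharm x hx
  rw [lapf] at h0
  set L : ℝ := ∑ i, hess b x (EuclideanSpace.single i 1) (EuclideanSpace.single i 1) with hL
  set Sv : ℝ := ∑ i, (fderiv ℝ b x (EuclideanSpace.single i 1))^2 with hSv
  set I : ℝ := ⟪gradient f x, gradient b x⟫ with hI
  have hlapu : lap (fun z => b z ^ (2-k)) x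
      = ((2-k)*((2-k)-1)*b x^((2-k)-1-1))*Sv + ((2-k)*b x^((2-k)-1))*L := by
    rw [lap]
    calc ∑ i, hess (fun z => b z ^ (2-k)) x (EuclideanSpace.single i 1) (EuclideanSpace.single i 1)
        = ∑ i, (((2-k)*((2-k)-1)*b x^((2-k)-1-1))*(fderiv ℝ b x (EuclideanSpace.single i 1))^2
            + ((2-k)*b x^((2-k)-1))*hess b x (EuclideanSpace.single i 1) (EuclideanSpace.single i 1)) := by
          refine Finset.sum_congr rfl fun i _ => ?_
          rw [hess_rpow hΩ hb hbpos (2-k) hx]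
          ring
      _ = _ := by
          rw [Finset.sum_add_distrib, ← Finset.mul_sum, ← Finset.mul_sum, hSv, hL]
  have hinner : ⟪gradient f x, gradient (fun z => b z ^ (2-k)) x⟫
      = ((2-k) * b x ^ ((2-k)-1)) * I := by
    rw [real_inner_comm, inner_grad, fderiv_rpow (sm_diffAt hΩ hb hx) hbx.ne' (2-k)]
    have : fderiv ℝ b x (gradient f x) = I := by
      rw [← inner_grad b x (gradient f x), real_inner_comm, hI]
    rw [this]
  rw [hlapu, hinner] at h0
  have hk0 : (2-k) ≠ 0 := by intro h; linarith
  have h2 : b x ^ ((2-k)-1) * (L - I) = (k-1) * (b x ^ ((2-k)-1-1) * Sv) := by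
    apply mul_left_cancel₀ hk0
    linear_combination h0
  have hradd : ∀ q r : ℝ, b x ^ q * b x ^ r = b x ^ (q + r) :=
    fun q r => (Real.rpow_add hbx q r).symm
  calc b x * (L - I) = b x ^ (k + ((2-k)-1)) * (L - I) := by
        rw [show k + ((2-k)-1) = 1 by ring, Real.rpow_one]
    _ = b x ^ (k:ℝ) * (b x ^ ((2-k)-1) * (L - I)) := by rw [← mul_assoc, hradd]
    _ = b x ^ (k:ℝ) * ((k-1) * (b x ^ ((2-k)-1-1) * Sv)) := by rw [h2]
    _ = (k-1) * ((b x ^ (k:ℝ) * b x ^ ((2-k)-1-1)) * Sv) := by ring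
    _ = (k-1) * Sv := by
        rw [hradd, show k + ((2-k)-1-1) = 0 by ring, Real.rpow_zero, one_mul]

end


lemma sum2_split (F G : Fin n → Fin n → ℝ) :
    ∑ i, ∑ j, (2*(F i j) + 2*(G i j))
      = 2*(∑ i, ∑ j, F i j) + 2*(∑ i, ∑ j, G i j) := by
  simp [Finset.sum_add_distrib, Finset.mul_sum]

lemma sum2_split3 (F G H : Fin n → Fin n → ℝ) :
    ∑ i, ∑ j, (4*(F i j) + 8*(G i j) + 4*(H i j))
      = 4*(∑ i, ∑ j, F i j) + 8*(∑ i, ∑ j, G i j) + 4*(∑ i, ∑ j, H i j) := by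
  simp [Finset.sum_add_distrib, Finset.mul_sum]

end S5

theorem stmt_5 (Ω : Set (EuclideanSpace ℝ (Fin n))) (hΩ : IsOpen Ω)
    (f b : EuclideanSpace ℝ (Fin n) → ℝ)
    (hf : ContDiffOn ℝ (⊤ : ℕ∞) f Ω) (hb : ContDiffOn ℝ (⊤ : ℕ∞) b Ω)
    (hbpos : ∀ x ∈ Ω, 0 < b x) (k : ℝ) (hk : 2 < k)
    (hharm : ∀ x ∈ Ω, lapf f (fun y => b y ^ (2 - k)) x = 0) :
    ∀ x ∈ Ω,
      2 * b x ^ 2 * lapf f (fun y => ‖gradient b y‖ ^ 2) x =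
        hessNormSq (fun y => b y ^ 2) x +
          hess f x (gradient (fun y => b y ^ 2) x) (gradient (fun y => b y ^ 2) x) +
          (2 * k - 4) * ⟪gradient (fun y => b y ^ 2) x,
                          gradient (fun y => ‖gradient b y‖ ^ 2) x⟫ -
          4 * k * ‖gradient b x‖ ^ 4 := by
  intro x hx
  have hb' : ContDiffOn ℝ ∞ b Ω := hb.of_le (by simp)
  have hf' : ContDiffOn ℝ ∞ f Ω := hf.of_le (by simp)
  have hGbexp : gradient b x = ∑ i, fderiv ℝ b x (EuclideanSpace.single i 1) • (EuclideanSpace.single i 1 : EuclideanSpace ℝ (Fin n)) :=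
    S5.grad_expand b x
  have hGfexp : gradient f x = ∑ i, fderiv ℝ f x (EuclideanSpace.single i 1) • (EuclideanSpace.single i 1 : EuclideanSpace ℝ (Fin n)) :=
    S5.grad_expand f x
  have hGS : ‖gradient b x‖^2 = ∑ i, (fderiv ℝ b x (EuclideanSpace.single i 1))^2 := by
    rw [S5.normsq_eq]
    exact Finset.sum_congr rfl fun i _ => by rw [S5.grad_apply]
  have hessGbL : ∀ (φ : EuclideanSpace ℝ (Fin n) → ℝ) (v : EuclideanSpace ℝ (Fin n)),
      hess φ x (gradient b x) v = ∑ j, fderiv ℝ b x (EuclideanSpace.single j 1) * hess φ x (EuclideanSpace.single j 1) v := by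
    intro φ v
    conv_lhs => rw [hGbexp]
    exact S5.hess_sum_left φ x v _ _
  -- F5
  have F5 : ‖gradient b x‖^4 = (∑ i, (fderiv ℝ b x (EuclideanSpace.single i 1))^2)^2 := by
    rw [show ‖gradient b x‖^4 = (‖gradient b x‖^2)^2 by ring, hGS]
  -- gradient of b^2
  have hgradu : gradient (fun y => b y ^ 2) x = (2 * b x) • gradient b x :=
    S5.grad_sq hΩ hb' hx
  -- F3
  have F3 : hess f x (gradient (fun y => b y ^ 2) x) (gradient (fun y => b y ^ 2) x)
      = 4 * (b x)^2 * ∑ i, hess f x (gradient b x) (EuclideanSpace.single i 1) * fderiv ℝ b x (EuclideanSpace.single i 1) := by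
    rw [hgradu, S5.hess_smul_left, S5.hess_smul_right]
    have h1 : hess f x (gradient b x) (gradient b x)
        = ∑ i, hess f x (gradient b x) (EuclideanSpace.single i 1) * fderiv ℝ b x (EuclideanSpace.single i 1) := by
      nth_rewrite 2 [hGbexp]
      rw [S5.hess_sum_right]
      exact Finset.sum_congr rfl fun i _ => by ring
    rw [h1]
    simp only [Finset.mul_sum]
    refine Finset.sum_congr rfl fun i _ => by ring
  -- F4
  have F4 : ⟪gradient (fun y => b y ^ 2) x, gradient (fun y => ‖gradient b y‖ ^ 2) x⟫
      = 4 * b x * ∑ i, fderiv ℝ b x (EuclideanSpace.single i 1) * hess b x (gradient b x) (EuclideanSpace.single i 1) := by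
    rw [real_inner_comm, S5.inner_grad, hgradu, S5.fderiv_smul_arg,
      S5.d_normsq hΩ hb' hx (gradient b x)]
    simp only [Finset.mul_sum]
    exact Finset.sum_congr rfl fun i _ => by ring
  -- F6 : constraint at x
  have F6 : b x * ((∑ i, hess b x (EuclideanSpace.single i 1) (EuclideanSpace.single i 1)) - ⟪gradient f x, gradient b x⟫)
      = (k-1) * ∑ i, (fderiv ℝ b x (EuclideanSpace.single i 1))^2 :=
    S5.constraint hΩ hb' hf' hbpos hk hharm hx
  -- smoothness of auxiliary functions
  have hLsm : ContDiffOn ℝ ∞ (fun y => ∑ i, fderiv ℝ (fun z => fderiv ℝ b z (EuclideanSpace.single i 1)) y (EuclideanSpace.single i 1)) Ω :=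
    ContDiffOn.sum fun i _ => S5.sm_der hΩ (S5.sm_der hΩ hb' _) _
  have hPfsm : ContDiffOn ℝ ∞ (fun y => ∑ i, fderiv ℝ f y (EuclideanSpace.single i 1) * fderiv ℝ b y (EuclideanSpace.single i 1)) Ω :=
    ContDiffOn.sum fun i _ => (S5.sm_der hΩ hf' _).mul (S5.sm_der hΩ hb' _)
  have hSfsm : ContDiffOn ℝ ∞ (fun y => ∑ i, (fderiv ℝ b y (EuclideanSpace.single i 1))^2) Ω := S5.sm_sumsq hΩ hb'
  have hLc : ∀ y ∈ Ω, (∑ i, fderiv ℝ (fun z => fderiv ℝ b z (EuclideanSpace.single i 1)) y (EuclideanSpace.single i 1))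
      = ∑ i, hess b y (EuclideanSpace.single i 1) (EuclideanSpace.single i 1) :=
    fun y hy => Finset.sum_congr rfl fun i _ => S5.fderiv_der hΩ hb' hy _ _
  have hPfc : ∀ y, (∑ i, fderiv ℝ f y (EuclideanSpace.single i 1) * fderiv ℝ b y (EuclideanSpace.single i 1))
      = ⟪gradient f y, gradient b y⟫ := by
    intro y
    rw [S5.inner_eval]
    exact Finset.sum_congr rfl fun i _ => by rw [S5.grad_apply, S5.grad_apply]
  -- F7 : differentiated constraint
  have F7 : (∑ i, (fderiv ℝ b x (EuclideanSpace.single i 1))^2) * ((∑ i, hess b x (EuclideanSpace.single i 1) (EuclideanSpace.single i 1)) - ⟪gradient f x, gradient b x⟫)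
      + b x * ((∑ i, hess (fun z => fderiv ℝ b z (EuclideanSpace.single i 1)) x (gradient b x) (EuclideanSpace.single i 1))
          - ((∑ i, hess f x (gradient b x) (EuclideanSpace.single i 1) * fderiv ℝ b x (EuclideanSpace.single i 1))
            + (∑ i, fderiv ℝ f x (EuclideanSpace.single i 1) * hess b x (gradient b x) (EuclideanSpace.single i 1))))
      = 2*(k-1) * ∑ i, fderiv ℝ b x (EuclideanSpace.single i 1) * hess b x (gradient b x) (EuclideanSpace.single i 1) := by
    have hC : ∀ y ∈ Ω, b y * ((∑ i, fderiv ℝ (fun z => fderiv ℝ b z (EuclideanSpace.single i 1)) y (EuclideanSpace.single i 1))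
        - (∑ i, fderiv ℝ f y (EuclideanSpace.single i 1) * fderiv ℝ b y (EuclideanSpace.single i 1)))
        = (k-1) * ∑ i, (fderiv ℝ b y (EuclideanSpace.single i 1))^2 := by
      intro y hy
      rw [hLc y hy, hPfc y]
      exact S5.constraint hΩ hb' hf' hbpos hk hharm hy
    have hdC := S5.fderiv_congr_on hΩ hx hC
    have h1 := DFunLike.congr_fun hdC (gradient b x)
    have hLd : DifferentiableAt ℝ (fun y => ∑ i, fderiv ℝ (fun z => fderiv ℝ b z (EuclideanSpace.single i 1)) y (EuclideanSpace.single i 1)) x :=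
      S5.sm_diffAt hΩ hLsm hx
    have hPfd : DifferentiableAt ℝ (fun y => ∑ i, fderiv ℝ f y (EuclideanSpace.single i 1) * fderiv ℝ b y (EuclideanSpace.single i 1)) x :=
      S5.sm_diffAt hΩ hPfsm hx
    rw [S5.fderiv_mul_apply (S5.sm_diffAt hΩ hb' hx) (hLd.fun_sub hPfd)] at h1
    rw [fderiv_fun_sub hLd hPfd] at h1
    simp only [ContinuousLinearMap.sub_apply] at h1
    have hLx : fderiv ℝ (fun y => ∑ i, fderiv ℝ (fun z => fderiv ℝ b z (EuclideanSpace.single i 1)) y (EuclideanSpace.single i 1)) x (gradient b x)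
        = ∑ i, hess (fun z => fderiv ℝ b z (EuclideanSpace.single i 1)) x (gradient b x) (EuclideanSpace.single i 1) := by
      rw [S5.fderiv_finsum_apply _ (fun i => S5.sm_diffAt hΩ (S5.sm_der hΩ (S5.sm_der hΩ hb' _) _) hx) _]
      exact Finset.sum_congr rfl fun i _ => S5.fderiv_der hΩ (S5.sm_der hΩ hb' _) hx _ _
    have hPfx : fderiv ℝ (fun y => ∑ i, fderiv ℝ f y (EuclideanSpace.single i 1) * fderiv ℝ b y (EuclideanSpace.single i 1)) x (gradient b x)
        = (∑ i, hess f x (gradient b x) (EuclideanSpace.single i 1) * fderiv ℝ b x (EuclideanSpace.single i 1))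
          + (∑ i, fderiv ℝ f x (EuclideanSpace.single i 1) * hess b x (gradient b x) (EuclideanSpace.single i 1)) := by
      rw [S5.fderiv_finsum_apply _
        (fun i => (S5.sm_diffAt hΩ (S5.sm_der hΩ hf' _) hx).fun_mul (S5.sm_diffAt hΩ (S5.sm_der hΩ hb' _) hx)) _]
      rw [← Finset.sum_add_distrib]
      refine Finset.sum_congr rfl fun i _ => ?_
      rw [S5.fderiv_mul_apply (S5.sm_diffAt hΩ (S5.sm_der hΩ hf' _) hx) (S5.sm_diffAt hΩ (S5.sm_der hΩ hb' _) hx),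
        S5.fderiv_der hΩ hf' hx, S5.fderiv_der hΩ hb' hx]
    have hfbGb : fderiv ℝ b x (gradient b x) = ∑ i, (fderiv ℝ b x (EuclideanSpace.single i 1))^2 := by
      rw [← S5.inner_grad b x (gradient b x), real_inner_self_eq_norm_sq, hGS]
    rw [hLx, hPfx, hLc x hx, hPfc x, hfbGb] at h1
    rw [fderiv_const_mul (S5.sm_diffAt hΩ hSfsm hx)] at h1
    simp only [ContinuousLinearMap.smul_apply, smul_eq_mul] at h1
    rw [S5.d_sumsq hΩ hb' hx (gradient b x)] at h1
    have h2 : (∑ i, 2 * fderiv ℝ b x (EuclideanSpace.single i 1) * hess b x (gradient b x) (EuclideanSpace.single i 1))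
        = 2 * ∑ i, fderiv ℝ b x (EuclideanSpace.single i 1) * hess b x (gradient b x) (EuclideanSpace.single i 1) := by
      rw [Finset.mul_sum]
      exact Finset.sum_congr rfl fun i _ => by ring
    rw [h2] at h1
    linarith [h1]
  -- F2
  have F2 : hessNormSq (fun y => b y ^ 2) x
      = 4*(∑ i, (fderiv ℝ b x (EuclideanSpace.single i 1))^2)^2
        + 8*(b x)*(∑ i, fderiv ℝ b x (EuclideanSpace.single i 1) * hess b x (gradient b x) (EuclideanSpace.single i 1))
        + 4*(b x)^2*(∑ i, ∑ j, (hess b x (EuclideanSpace.single i 1) (EuclideanSpace.single j 1))^2) := by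
    have hQ2 : (∑ i, fderiv ℝ b x (EuclideanSpace.single i 1) * hess b x (gradient b x) (EuclideanSpace.single i 1))
        = ∑ i, ∑ j, (fderiv ℝ b x (EuclideanSpace.single i 1))*(fderiv ℝ b x (EuclideanSpace.single j 1)) * hess b x (EuclideanSpace.single i 1) (EuclideanSpace.single j 1) := by
      calc ∑ i, fderiv ℝ b x (EuclideanSpace.single i 1) * hess b x (gradient b x) (EuclideanSpace.single i 1)
          = ∑ i, ∑ j, fderiv ℝ b x (EuclideanSpace.single i 1) * (fderiv ℝ b x (EuclideanSpace.single j 1) * hess b x (EuclideanSpace.single j 1) (EuclideanSpace.single i 1)) := by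
            refine Finset.sum_congr rfl fun i _ => ?_
            rw [hessGbL b (EuclideanSpace.single i 1), Finset.mul_sum]
        _ = ∑ j, ∑ i, fderiv ℝ b x (EuclideanSpace.single i 1) * (fderiv ℝ b x (EuclideanSpace.single j 1) * hess b x (EuclideanSpace.single j 1) (EuclideanSpace.single i 1)) :=
            Finset.sum_comm
        _ = ∑ i, ∑ j, (fderiv ℝ b x (EuclideanSpace.single i 1))*(fderiv ℝ b x (EuclideanSpace.single j 1)) * hess b x (EuclideanSpace.single i 1) (EuclideanSpace.single j 1) := by
            refine Finset.sum_congr rfl fun i _ => Finset.sum_congr rfl fun j _ => by ring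
    have hSS : (∑ i, (fderiv ℝ b x (EuclideanSpace.single i 1))^2)^2
        = ∑ i, ∑ j, (fderiv ℝ b x (EuclideanSpace.single i 1))^2 * (fderiv ℝ b x (EuclideanSpace.single j 1))^2 := by
      rw [sq, Finset.sum_mul_sum]
    show (∑ i, ∑ j, (hess (fun y => b y ^ 2) x (EuclideanSpace.single i 1) (EuclideanSpace.single j 1))^2) = _
    calc ∑ i, ∑ j, (hess (fun y => b y ^ 2) x (EuclideanSpace.single i 1) (EuclideanSpace.single j 1))^2
        = ∑ i, ∑ j, (4*((fderiv ℝ b x (EuclideanSpace.single i 1))^2 * (fderiv ℝ b x (EuclideanSpace.single j 1))^2)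
            + 8*((b x) * ((fderiv ℝ b x (EuclideanSpace.single i 1))*(fderiv ℝ b x (EuclideanSpace.single j 1)) * hess b x (EuclideanSpace.single i 1) (EuclideanSpace.single j 1)))
            + 4*((b x)^2 * (hess b x (EuclideanSpace.single i 1) (EuclideanSpace.single j 1))^2)) := by
          refine Finset.sum_congr rfl fun i _ => Finset.sum_congr rfl fun j _ => ?_
          rw [S5.hess_sq hΩ hb' hx]
          ring
      _ = _ := by
          rw [S5.sum2_split3]
          rw [hQ2, hSS]
          simp only [← Finset.mul_sum]
          ring
  -- F1
  have F1 : lapf f (fun y => ‖gradient b y‖ ^ 2) x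
      = 2*(∑ i, ∑ j, (hess b x (EuclideanSpace.single i 1) (EuclideanSpace.single j 1))^2)
        + 2*(∑ i, hess (fun z => fderiv ℝ b z (EuclideanSpace.single i 1)) x (gradient b x) (EuclideanSpace.single i 1))
        - 2*(∑ i, fderiv ℝ f x (EuclideanSpace.single i 1) * hess b x (gradient b x) (EuclideanSpace.single i 1)) := by
    have hwsm : ContDiffOn ℝ ∞ (fun y => ‖gradient b y‖^2) Ω := by
      rw [S5.w_eq b]; exact hSfsm
    have hterm : ∀ i : Fin n, hess (fun y => ‖gradient b y‖^2) x (EuclideanSpace.single i 1) (EuclideanSpace.single i 1)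
        = ∑ j, (2*((hess b x (EuclideanSpace.single i 1) (EuclideanSpace.single j 1))^2)
            + 2*(fderiv ℝ b x (EuclideanSpace.single j 1) * hess (fun z => fderiv ℝ b z (EuclideanSpace.single j 1)) x (EuclideanSpace.single i 1) (EuclideanSpace.single i 1))) := by
      intro i
      rw [S5.w_eq b, ← S5.fderiv_der hΩ hSfsm hx (EuclideanSpace.single i 1) (EuclideanSpace.single i 1)]
      have hcg : fderiv ℝ (fun y => fderiv ℝ (fun z => ∑ j, (fderiv ℝ b z (EuclideanSpace.single j 1))^2) y (EuclideanSpace.single i 1)) x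
          = fderiv ℝ (fun y => ∑ j, 2*((fderiv ℝ b y (EuclideanSpace.single j 1)) * fderiv ℝ (fun z => fderiv ℝ b z (EuclideanSpace.single j 1)) y (EuclideanSpace.single i 1))) x := by
        refine S5.fderiv_congr_on hΩ hx fun y hy => ?_
        rw [S5.d_sumsq hΩ hb' hy]
        refine Finset.sum_congr rfl fun j _ => ?_
        rw [S5.fderiv_der hΩ hb' hy (EuclideanSpace.single j 1) (EuclideanSpace.single i 1)]
        ring
      rw [hcg]
      rw [S5.fderiv_finsum_apply _ (fun j => ((S5.sm_diffAt hΩ (S5.sm_der hΩ hb' _) hx).fun_mul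
        (S5.sm_diffAt hΩ (S5.sm_der hΩ (S5.sm_der hΩ hb' _) _) hx)).const_mul 2) _]
      refine Finset.sum_congr rfl fun j _ => ?_
      rw [fderiv_const_mul ((S5.sm_diffAt hΩ (S5.sm_der hΩ hb' _) hx).fun_mul
        (S5.sm_diffAt hΩ (S5.sm_der hΩ (S5.sm_der hΩ hb' _) _) hx))]
      simp only [ContinuousLinearMap.smul_apply, smul_eq_mul]
      rw [S5.fderiv_mul_apply (S5.sm_diffAt hΩ (S5.sm_der hΩ hb' _) hx)
        (S5.sm_diffAt hΩ (S5.sm_der hΩ (S5.sm_der hΩ hb' _) _) hx)]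
      rw [S5.fderiv_der hΩ hb' hx (EuclideanSpace.single j 1) (EuclideanSpace.single i 1),
        S5.fderiv_der hΩ (S5.sm_der hΩ hb' _) hx (EuclideanSpace.single i 1) (EuclideanSpace.single i 1)]
      ring
    have hT3 : (∑ i, hess (fun z => fderiv ℝ b z (EuclideanSpace.single i 1)) x (gradient b x) (EuclideanSpace.single i 1))
        = ∑ i, ∑ j, fderiv ℝ b x (EuclideanSpace.single j 1) * hess (fun z => fderiv ℝ b z (EuclideanSpace.single j 1)) x (EuclideanSpace.single i 1) (EuclideanSpace.single i 1) := by
      refine Finset.sum_congr rfl fun i _ => ?_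
      rw [hessGbL _ (EuclideanSpace.single i 1)]
      refine Finset.sum_congr rfl fun j _ => ?_
      rw [S5.hess_der_swap hΩ hb' hx i j (EuclideanSpace.single i 1)]
    have hlapw : lap (fun y => ‖gradient b y‖^2) x
        = 2*(∑ i, ∑ j, (hess b x (EuclideanSpace.single i 1) (EuclideanSpace.single j 1))^2)
          + 2*(∑ i, hess (fun z => fderiv ℝ b z (EuclideanSpace.single i 1)) x (gradient b x) (EuclideanSpace.single i 1)) := by
      show (∑ i, hess (fun y => ‖gradient b y‖^2) x (EuclideanSpace.single i 1) (EuclideanSpace.single i 1)) = _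
      rw [Finset.sum_congr rfl fun i _ => hterm i, S5.sum2_split, hT3]
    have hinnerfw : ⟪gradient f x, gradient (fun y => ‖gradient b y‖^2) x⟫
        = 2*(∑ i, fderiv ℝ f x (EuclideanSpace.single i 1) * hess b x (gradient b x) (EuclideanSpace.single i 1)) := by
      rw [real_inner_comm, S5.inner_grad, S5.d_normsq hΩ hb' hx (gradient f x)]
      have h1 : ∀ j : Fin n, hess b x (gradient f x) (EuclideanSpace.single j 1)
          = ∑ i, fderiv ℝ f x (EuclideanSpace.single i 1) * hess b x (EuclideanSpace.single i 1) (EuclideanSpace.single j 1) := by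
        intro j
        conv_lhs => rw [hGfexp]
        exact S5.hess_sum_left b x _ _ _
      calc ∑ j, 2 * fderiv ℝ b x (EuclideanSpace.single j 1) * hess b x (gradient f x) (EuclideanSpace.single j 1)
          = ∑ j, ∑ i, 2 * (fderiv ℝ b x (EuclideanSpace.single j 1) * (fderiv ℝ f x (EuclideanSpace.single i 1) * hess b x (EuclideanSpace.single i 1) (EuclideanSpace.single j 1))) := by
            refine Finset.sum_congr rfl fun j _ => ?_
            rw [h1 j, Finset.mul_sum]
            exact Finset.sum_congr rfl fun i _ => by ring
        _ = ∑ i, ∑ j, 2 * (fderiv ℝ b x (EuclideanSpace.single j 1) * (fderiv ℝ f x (EuclideanSpace.single i 1) * hess b x (EuclideanSpace.single i 1) (EuclideanSpace.single j 1))) :=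
            Finset.sum_comm
        _ = 2*(∑ i, fderiv ℝ f x (EuclideanSpace.single i 1) * hess b x (gradient b x) (EuclideanSpace.single i 1)) := by
            simp only [Finset.mul_sum]
            refine Finset.sum_congr rfl fun i _ => ?_
            rw [hessGbL b (EuclideanSpace.single i 1)]
            simp only [Finset.mul_sum]
            refine Finset.sum_congr rfl fun j _ => ?_
            rw [S5.hess_symm hΩ hb' hx (EuclideanSpace.single i 1) (EuclideanSpace.single j 1)]
            ring
    show lap (fun y => ‖gradient b y‖^2) x - ⟪gradient f x, gradient (fun y => ‖gradient b y‖^2) x⟫ = _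
    rw [hlapw, hinnerfw]
  rw [F1, F2, F3, F4, F5]
  linear_combination (4 * b x) * F7 - 4 * F6 * (∑ i, (fderiv ℝ b x (EuclideanSpace.single i 1))^2)
end

section
/- Let Ω be an open subset of ℝⁿ, let f be a smooth real-valued function on Ω, let k > 2 be a real number, and let b be a smooth positive function on Ω with Δ_f(b^{2−k}) = 0 and ∇b ≠ 0 everywhere on Ω. Then for all real numbers q and β with β ≠ 0, at every point of Ω, Δ_f(b^{2q}·|∇b|^β) = (β/4)·b^{2q−2}·|∇b|^{β−2}·{ |Hess(b²)|² + Hess f(∇(b²), ∇(b²)) + 2(k−2+2q)·⟨∇(b²), ∇(|∇b|²)⟩ + 4(β−2)·b²·|∇(|∇b|)|² + [ (8q/β)(k−2+2q) − 4k ]·|∇b|⁴ }. -/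
open Real RealInnerProductSpace

variable {n : ℕ}

open scoped ContDiff

section AuxLemmas
variable {n : ℕ}
local notation "E" => EuclideanSpace ℝ (Fin n)

lemma aux_inner_gradient (u : E → ℝ) (x v : E) :
    ⟪gradient u x, v⟫ = fderiv ℝ u x v :=
  InnerProductSpace.toDual_symm_apply

lemma aux_gradient_apply (u : E → ℝ) (x : E) (i : Fin n) :
    gradient u x i = fderiv ℝ u x (EuclideanSpace.single i (1:ℝ)) := by
  have h := aux_inner_gradient u x (EuclideanSpace.single i (1:ℝ))
  rw [EuclideanSpace.inner_single_right] at h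
  simpa using h

lemma aux_inner_eq_sum (v w : E) : ⟪v, w⟫ = ∑ i, v i * w i := by
  simp [PiLp.inner_apply, RCLike.inner_apply, mul_comm]

lemma aux_norm_sq_eq_sum (v : E) : ‖v‖ ^ 2 = ∑ i, v i ^ 2 := by
  rw [← real_inner_self_eq_norm_sq, aux_inner_eq_sum]
  simp [sq]

lemma aux_basis_expand (v : E) : v = ∑ i, v i • EuclideanSpace.single i (1:ℝ) := by
  ext l
  rw [WithLp.ofLp_sum, Finset.sum_apply]
  simp [EuclideanSpace.single_apply]

lemma aux_one_le_inf : (1 : WithTop ℕ∞) ≤ ∞ := WithTop.coe_le_coe.mpr le_top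

lemma aux_two_le_inf : (2 : WithTop ℕ∞) ≤ ∞ := WithTop.coe_le_coe.mpr le_top

lemma aux_inf_add_one : (∞ : WithTop ℕ∞) + 1 ≤ ∞ := le_of_eq rfl

section

variable {Ω : Set (EuclideanSpace ℝ (Fin n))}
variable {F : Type*} [NormedAddCommGroup F] [NormedSpace ℝ F]

lemma aux_diffAt (hΩ : IsOpen Ω) {u : E → F} (hu : ContDiffOn ℝ ∞ u Ω)
    {x : E} (hx : x ∈ Ω) : DifferentiableAt ℝ u x :=
  (hu.contDiffAt (hΩ.mem_nhds hx)).differentiableAt (by simp)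

lemma aux_cd_fderiv (hΩ : IsOpen Ω) {u : E → F} (hu : ContDiffOn ℝ ∞ u Ω) :
    ContDiffOn ℝ ∞ (fun y => fderiv ℝ u y) Ω :=
  hu.fderiv_of_isOpen hΩ aux_inf_add_one

lemma aux_cd_fderiv_apply (hΩ : IsOpen Ω) {u : E → F} (hu : ContDiffOn ℝ ∞ u Ω)
    (v : E) : ContDiffOn ℝ ∞ (fun y => fderiv ℝ u y v) Ω :=
  (ContinuousLinearMap.apply ℝ F v).contDiff.comp_contDiffOn (aux_cd_fderiv hΩ hu)

/-- bridge: derivative of the applied first derivative. -/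
lemma aux_hasFDerivAt_fderiv_apply (hΩ : IsOpen Ω) {u : E → F}
    (hu : ContDiffOn ℝ ∞ u Ω) {x : E} (hx : x ∈ Ω) (w : E) :
    HasFDerivAt (fun y => fderiv ℝ u y w) ((fderiv ℝ (fderiv ℝ u) x).flip w) x := by
  have h1 : DifferentiableAt ℝ (fderiv ℝ u) x := aux_diffAt hΩ (aux_cd_fderiv hΩ hu) hx
  have h2 := h1.hasFDerivAt.clm_apply (hasFDerivAt_const w x)
  simpa using h2

end

section
variable {Ω : Set (EuclideanSpace ℝ (Fin n))}

lemma aux_hess_eq (hΩ : IsOpen Ω) {u : E → ℝ} (hu : ContDiffOn ℝ ∞ u Ω)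
    {x : E} (hx : x ∈ Ω) (v w : E) :
    hess u x v w = fderiv ℝ (fun y => fderiv ℝ u y w) x v := by
  rw [(aux_hasFDerivAt_fderiv_apply hΩ hu hx w).fderiv]
  rfl

lemma aux_hess_symm (hΩ : IsOpen Ω) {u : E → ℝ} (hu : ContDiffOn ℝ ∞ u Ω)
    {x : E} (hx : x ∈ Ω) (v w : E) :
    hess u x v w = hess u x w v :=
  (hu.contDiffAt (hΩ.mem_nhds hx)).isSymmSndFDerivAt (by rw [minSmoothness_of_isRCLikeNormedField]; exact aux_two_le_inf) v w

lemma aux_hess_congr {u1 u2 : E → ℝ} {x : E} (h : u1 =ᶠ[nhds x] u2) (v w : E) :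
    hess u1 x v w = hess u2 x v w := by
  have h2 : fderiv ℝ u1 =ᶠ[nhds x] fderiv ℝ u2 := h.fderiv
  unfold hess
  rw [h2.fderiv_eq]

lemma aux_lap_congr {u1 u2 : E → ℝ} {x : E} (h : u1 =ᶠ[nhds x] u2) :
    lap u1 x = lap u2 x := by
  unfold lap
  exact Finset.sum_congr rfl fun i _ => aux_hess_congr h _ _

lemma aux_gradient_congr {u1 u2 : E → ℝ} {x : E} (h : u1 =ᶠ[nhds x] u2) :
    gradient u1 x = gradient u2 x := by
  unfold gradient
  rw [h.fderiv_eq]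

lemma aux_lapf_congr (f : E → ℝ) {u1 u2 : E → ℝ} {x : E} (h : u1 =ᶠ[nhds x] u2) :
    lapf f u1 x = lapf f u2 x := by
  unfold lapf
  rw [aux_lap_congr h, aux_gradient_congr h]

lemma aux_fderiv_swap (hΩ : IsOpen Ω) {u : E → ℝ} (hu : ContDiffOn ℝ ∞ u Ω)
    {y : E} (hy : y ∈ Ω) (v c : E) :
    fderiv ℝ (fun z => fderiv ℝ u z v) y c = fderiv ℝ (fun z => fderiv ℝ u z c) y v := by
  rw [← aux_hess_eq hΩ hu hy c v, ← aux_hess_eq hΩ hu hy v c, aux_hess_symm hΩ hu hy]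

lemma aux_hess_fderiv_swap (hΩ : IsOpen Ω) {u : E → ℝ} (hu : ContDiffOn ℝ ∞ u Ω)
    {x : E} (hx : x ∈ Ω) (a c v : E) :
    hess (fun y => fderiv ℝ u y v) x a c = hess (fun y => fderiv ℝ u y c) x a v := by
  rw [aux_hess_eq hΩ (aux_cd_fderiv_apply hΩ hu v) hx a c,
      aux_hess_eq hΩ (aux_cd_fderiv_apply hΩ hu c) hx a v]
  have h : (fun y => fderiv ℝ (fun z => fderiv ℝ u z v) y c)
      =ᶠ[nhds x] (fun y => fderiv ℝ (fun z => fderiv ℝ u z c) y v) := by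
    filter_upwards [hΩ.mem_nhds hx] with y hy
    exact aux_fderiv_swap hΩ hu hy v c
  rw [h.fderiv_eq]

lemma aux_hess_bilin (u : E → ℝ) (x v w : E) :
    hess u x v w = ∑ i, ∑ j, v i * w j *
      hess u x (EuclideanSpace.single i (1:ℝ)) (EuclideanSpace.single j (1:ℝ)) := by
  unfold hess
  conv_lhs => rw [aux_basis_expand v]
  rw [map_sum, ContinuousLinearMap.sum_apply]
  refine Finset.sum_congr rfl fun i _ => ?_
  rw [map_smul, ContinuousLinearMap.smul_apply, smul_eq_mul]
  conv_lhs => rw [aux_basis_expand w, map_sum]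
  rw [Finset.mul_sum]
  refine Finset.sum_congr rfl fun j _ => ?_
  rw [map_smul, smul_eq_mul]
  ring

end

section
variable {Ω : Set (EuclideanSpace ℝ (Fin n))}

lemma aux_fderiv_mul_apply {u v : E → ℝ} {x : E} (hu : DifferentiableAt ℝ u x)
    (hv : DifferentiableAt ℝ v x) (c : E) :
    fderiv ℝ (fun y => u y * v y) x c = u x * fderiv ℝ v x c + v x * fderiv ℝ u x c := by
  rw [(hu.hasFDerivAt.fun_mul hv.hasFDerivAt).fderiv]
  simp

lemma aux_fderiv_rpow_apply {u : E → ℝ} {x : E} (hu : DifferentiableAt ℝ u x)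
    (hux : u x ≠ 0) (p : ℝ) (c : E) :
    fderiv ℝ (fun y => u y ^ p) x c = p * u x ^ (p - 1) * fderiv ℝ u x c := by
  rw [(hu.hasFDerivAt.rpow_const (Or.inl hux)).fderiv]
  simp [mul_assoc]

lemma aux_gradient_inner_eq (f u : E → ℝ) (x : E) :
    ⟪gradient f x, gradient u x⟫ =
      ∑ i, fderiv ℝ f x (EuclideanSpace.single i (1:ℝ)) *
        fderiv ℝ u x (EuclideanSpace.single i (1:ℝ)) := by
  rw [aux_inner_eq_sum]
  exact Finset.sum_congr rfl fun i _ => by rw [aux_gradient_apply, aux_gradient_apply]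

lemma aux_hess_mul (hΩ : IsOpen Ω) {u v : E → ℝ} (hu : ContDiffOn ℝ ∞ u Ω)
    (hv : ContDiffOn ℝ ∞ v Ω) {x : E} (hx : x ∈ Ω) (a c : E) :
    hess (fun y => u y * v y) x a c =
      u x * hess v x a c + v x * hess u x a c
      + fderiv ℝ u x a * fderiv ℝ v x c + fderiv ℝ u x c * fderiv ℝ v x a := by
  rw [aux_hess_eq hΩ (hu.mul hv) hx a c]
  have hev : (fun y => fderiv ℝ (fun z => u z * v z) y c) =ᶠ[nhds x]
      (fun y => u y * fderiv ℝ v y c + v y * fderiv ℝ u y c) := by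
    filter_upwards [hΩ.mem_nhds hx] with y hy
    exact aux_fderiv_mul_apply (aux_diffAt hΩ hu hy) (aux_diffAt hΩ hv hy) c
  rw [hev.fderiv_eq]
  have h1 := ((aux_diffAt hΩ hu hx).hasFDerivAt.fun_mul (aux_hasFDerivAt_fderiv_apply hΩ hv hx c)).fun_add
    ((aux_diffAt hΩ hv hx).hasFDerivAt.fun_mul (aux_hasFDerivAt_fderiv_apply hΩ hu hx c))
  rw [h1.fderiv]
  rw [aux_hess_eq hΩ hv hx a c, aux_hess_eq hΩ hu hx a c,
    (aux_hasFDerivAt_fderiv_apply hΩ hv hx c).fderiv,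
    (aux_hasFDerivAt_fderiv_apply hΩ hu hx c).fderiv]
  simp
  ring

lemma aux_hess_rpow (hΩ : IsOpen Ω) {u : E → ℝ} (hu : ContDiffOn ℝ ∞ u Ω)
    (hpos : ∀ y ∈ Ω, 0 < u y) {x : E} (hx : x ∈ Ω) (p : ℝ) (a c : E) :
    hess (fun y => u y ^ p) x a c =
      p * (p-1) * u x ^ (p-2) * fderiv ℝ u x a * fderiv ℝ u x c
      + p * u x ^ (p-1) * hess u x a c := by
  have hne : ∀ y ∈ Ω, u y ≠ 0 := fun y hy => ne_of_gt (hpos y hy)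
  rw [aux_hess_eq hΩ (hu.rpow_const_of_ne hne) hx a c]
  have hev : (fun y => fderiv ℝ (fun z => u z ^ p) y c) =ᶠ[nhds x]
      (fun y => p * (u y ^ (p-1) * fderiv ℝ u y c)) := by
    filter_upwards [hΩ.mem_nhds hx] with y hy
    rw [aux_fderiv_rpow_apply (aux_diffAt hΩ hu hy) (hne y hy) p c, mul_assoc]
  rw [hev.fderiv_eq]
  have h2 : HasFDerivAt (fun y => u y ^ (p-1))
      (((p-1) * u x ^ (p-1-1)) • fderiv ℝ u x) x :=
    (aux_diffAt hΩ hu hx).hasFDerivAt.rpow_const (Or.inl (hne x hx))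
  have h1 := ((h2.fun_mul (aux_hasFDerivAt_fderiv_apply hΩ hu hx c)).const_mul p)
  rw [h1.fderiv]
  rw [aux_hess_eq hΩ hu hx a c, (aux_hasFDerivAt_fderiv_apply hΩ hu hx c).fderiv]
  have hexp : p - 1 - 1 = p - 2 := by ring
  simp [hexp]
  ring

lemma aux_lapf_mul (hΩ : IsOpen Ω) (f : E → ℝ) {u v : E → ℝ} (hu : ContDiffOn ℝ ∞ u Ω)
    (hv : ContDiffOn ℝ ∞ v Ω) {x : E} (hx : x ∈ Ω) :
    lapf f (fun y => u y * v y) x = u x * lapf f v x + v x * lapf f u x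
      + 2 * ∑ i, fderiv ℝ u x (EuclideanSpace.single i (1:ℝ)) *
          fderiv ℝ v x (EuclideanSpace.single i (1:ℝ)) := by
  unfold lapf lap
  rw [aux_gradient_inner_eq, aux_gradient_inner_eq, aux_gradient_inner_eq]
  have h1 : ∀ i : Fin n, hess (fun y => u y * v y) x (EuclideanSpace.single i (1:ℝ))
      (EuclideanSpace.single i (1:ℝ)) =
      u x * hess v x (EuclideanSpace.single i (1:ℝ)) (EuclideanSpace.single i (1:ℝ))
      + v x * hess u x (EuclideanSpace.single i (1:ℝ)) (EuclideanSpace.single i (1:ℝ))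
      + 2 * (fderiv ℝ u x (EuclideanSpace.single i (1:ℝ)) *
          fderiv ℝ v x (EuclideanSpace.single i (1:ℝ))) := by
    intro i
    rw [aux_hess_mul hΩ hu hv hx]
    ring
  have h2 : ∀ i : Fin n, fderiv ℝ f x (EuclideanSpace.single i (1:ℝ)) *
      fderiv ℝ (fun y => u y * v y) x (EuclideanSpace.single i (1:ℝ)) =
      u x * (fderiv ℝ f x (EuclideanSpace.single i (1:ℝ)) *
        fderiv ℝ v x (EuclideanSpace.single i (1:ℝ)))
      + v x * (fderiv ℝ f x (EuclideanSpace.single i (1:ℝ)) *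
        fderiv ℝ u x (EuclideanSpace.single i (1:ℝ))) := by
    intro i
    rw [aux_fderiv_mul_apply (aux_diffAt hΩ hu hx) (aux_diffAt hΩ hv hx)]
    ring
  rw [Finset.sum_congr rfl fun i _ => h1 i, Finset.sum_congr rfl fun i _ => h2 i]
  simp only [Finset.sum_add_distrib, ← Finset.mul_sum]
  ring

lemma aux_lapf_rpow (hΩ : IsOpen Ω) (f : E → ℝ) {u : E → ℝ} (hu : ContDiffOn ℝ ∞ u Ω)
    (hpos : ∀ y ∈ Ω, 0 < u y) {x : E} (hx : x ∈ Ω) (p : ℝ) :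
    lapf f (fun y => u y ^ p) x = p * u x ^ (p-1) * lapf f u x
      + p * (p-1) * u x ^ (p-2) *
        ∑ i, (fderiv ℝ u x (EuclideanSpace.single i (1:ℝ)))^2 := by
  unfold lapf lap
  rw [aux_gradient_inner_eq, aux_gradient_inner_eq]
  have h1 : ∀ i : Fin n, hess (fun y => u y ^ p) x (EuclideanSpace.single i (1:ℝ))
      (EuclideanSpace.single i (1:ℝ)) =
      p * (p-1) * u x ^ (p-2) * (fderiv ℝ u x (EuclideanSpace.single i (1:ℝ)))^2
      + p * u x ^ (p-1) * hess u x (EuclideanSpace.single i (1:ℝ))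
          (EuclideanSpace.single i (1:ℝ)) := by
    intro i
    rw [aux_hess_rpow hΩ hu hpos hx]
    ring
  have h2 : ∀ i : Fin n, fderiv ℝ f x (EuclideanSpace.single i (1:ℝ)) *
      fderiv ℝ (fun y => u y ^ p) x (EuclideanSpace.single i (1:ℝ)) =
      p * u x ^ (p-1) * (fderiv ℝ f x (EuclideanSpace.single i (1:ℝ)) *
        fderiv ℝ u x (EuclideanSpace.single i (1:ℝ))) := by
    intro i
    rw [aux_fderiv_rpow_apply (aux_diffAt hΩ hu hx) (ne_of_gt (hpos x hx)) p]
    ring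
  rw [Finset.sum_congr rfl fun i _ => h1 i, Finset.sum_congr rfl fun i _ => h2 i]
  simp only [Finset.sum_add_distrib, ← Finset.mul_sum]
  ring

end

/-- `|∇b|²` written as a sum of squares of partial derivatives. -/
noncomputable def auxW (b : EuclideanSpace ℝ (Fin n) → ℝ) : EuclideanSpace ℝ (Fin n) → ℝ :=
  fun y => ∑ j, (fderiv ℝ b y (EuclideanSpace.single j (1:ℝ)))^2

/-- partial derivative function -/
noncomputable def auxPD (b : EuclideanSpace ℝ (Fin n) → ℝ) (j : Fin n) :
    EuclideanSpace ℝ (Fin n) → ℝ :=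
  fun y => fderiv ℝ b y (EuclideanSpace.single j (1:ℝ))

section W
variable {Ω : Set (EuclideanSpace ℝ (Fin n))} {b : EuclideanSpace ℝ (Fin n) → ℝ}

lemma auxW_eq (b : E → ℝ) (y : E) : ‖gradient b y‖ ^ 2 = auxW b y := by
  rw [aux_norm_sq_eq_sum]
  exact Finset.sum_congr rfl fun i _ => by rw [aux_gradient_apply]

lemma auxPD_cd (hΩ : IsOpen Ω) (hb : ContDiffOn ℝ ∞ b Ω) (j : Fin n) :
    ContDiffOn ℝ ∞ (auxPD b j) Ω :=
  aux_cd_fderiv_apply hΩ hb _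

lemma auxW_cd (hΩ : IsOpen Ω) (hb : ContDiffOn ℝ ∞ b Ω) :
    ContDiffOn ℝ ∞ (auxW b) Ω := by
  have : ∀ j : Fin n, ContDiffOn ℝ ∞
      (fun y => (fderiv ℝ b y (EuclideanSpace.single j (1:ℝ)))^2) Ω :=
    fun j => (auxPD_cd hΩ hb j).pow 2
  exact ContDiffOn.sum fun j _ => this j

lemma auxW_pos (hΩ : IsOpen Ω) {y : E} (hy : y ∈ Ω)
    (hbgrad : gradient b y ≠ 0) : 0 < auxW b y := by
  have h := norm_pos_iff.mpr hbgrad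
  rw [← auxW_eq]
  exact pow_pos h 2

lemma auxW_hasFDerivAt (hΩ : IsOpen Ω) (hb : ContDiffOn ℝ ∞ b Ω) {y : E} (hy : y ∈ Ω) :
    HasFDerivAt (auxW b)
      (∑ j, (2 * auxPD b j y) •
        ((fderiv ℝ (fderiv ℝ b) y).flip (EuclideanSpace.single j (1:ℝ)))) y := by
  have h1 : ∀ j : Fin n, HasFDerivAt (fun z => (auxPD b j z) * (auxPD b j z))
      ((2 * auxPD b j y) • ((fderiv ℝ (fderiv ℝ b) y).flip (EuclideanSpace.single j (1:ℝ)))) y := by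
    intro j
    have h := (aux_hasFDerivAt_fderiv_apply hΩ hb hy (EuclideanSpace.single j (1:ℝ))).fun_mul
      (aux_hasFDerivAt_fderiv_apply hΩ hb hy (EuclideanSpace.single j (1:ℝ)))
    refine h.congr_fderiv ?_
    rw [two_mul, add_smul]
    rfl
  have h2 := HasFDerivAt.fun_sum (fun j (_ : j ∈ Finset.univ) => h1 j)
  refine h2.congr_of_eventuallyEq (Filter.Eventually.of_forall fun z => ?_)
  unfold auxW auxPD
  exact Finset.sum_congr rfl fun j _ => (pow_two _)

lemma fderiv_auxPD (hΩ : IsOpen Ω) (hb : ContDiffOn ℝ ∞ b Ω) {y : E} (hy : y ∈ Ω)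
    (j : Fin n) (v : E) :
    fderiv ℝ (auxPD b j) y v = hess b y v (EuclideanSpace.single j (1:ℝ)) := by
  unfold auxPD
  rw [(aux_hasFDerivAt_fderiv_apply hΩ hb hy (EuclideanSpace.single j (1:ℝ))).fderiv]
  rfl

lemma auxW_fderiv_apply (hΩ : IsOpen Ω) (hb : ContDiffOn ℝ ∞ b Ω) {y : E} (hy : y ∈ Ω) (v : E) :
    fderiv ℝ (auxW b) y v = ∑ j, 2 * auxPD b j y * fderiv ℝ (auxPD b j) y v := by
  rw [(auxW_hasFDerivAt hΩ hb hy).fderiv]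
  rw [ContinuousLinearMap.sum_apply]
  refine Finset.sum_congr rfl fun j _ => ?_
  rw [ContinuousLinearMap.smul_apply, smul_eq_mul, ContinuousLinearMap.flip_apply,
    fderiv_auxPD hΩ hb hy j v]
  rfl

lemma auxW_hess (hΩ : IsOpen Ω) (hb : ContDiffOn ℝ ∞ b Ω) {x : E} (hx : x ∈ Ω) (a c : E) :
    hess (auxW b) x a c = ∑ j,
      (2 * fderiv ℝ (auxPD b j) x a * fderiv ℝ (auxPD b j) x c
        + 2 * auxPD b j x * hess (auxPD b j) x a c) := by
  rw [aux_hess_eq hΩ (auxW_cd hΩ hb) hx a c]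
  have hev : (fun y => fderiv ℝ (auxW b) y c) =ᶠ[nhds x]
      (fun y => ∑ j, 2 * auxPD b j y * fderiv ℝ (auxPD b j) y c) := by
    filter_upwards [hΩ.mem_nhds hx] with y hy
    exact auxW_fderiv_apply hΩ hb hy c
  rw [hev.fderiv_eq]
  have hterm : ∀ j : Fin n, HasFDerivAt
      (fun y => 2 * auxPD b j y * fderiv ℝ (auxPD b j) y c)
      ((2 * auxPD b j x) • ((fderiv ℝ (fderiv ℝ (auxPD b j)) x).flip c)
        + (fderiv ℝ (auxPD b j) x c) • ((2:ℝ) • ((fderiv ℝ (fderiv ℝ b) x).flip (EuclideanSpace.single j (1:ℝ))))) x := by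
    intro j
    have hpd : HasFDerivAt (fun y => 2 * auxPD b j y)
        ((2:ℝ) • ((fderiv ℝ (fderiv ℝ b) x).flip (EuclideanSpace.single j (1:ℝ)))) x :=
      (aux_hasFDerivAt_fderiv_apply hΩ hb hx (EuclideanSpace.single j (1:ℝ))).const_mul 2
    exact hpd.mul (aux_hasFDerivAt_fderiv_apply hΩ (auxPD_cd hΩ hb j) hx c)
  rw [(HasFDerivAt.fun_sum (fun j (_ : j ∈ Finset.univ) => hterm j)).fderiv]
  rw [ContinuousLinearMap.sum_apply]
  refine Finset.sum_congr rfl fun j _ => ?_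
  simp only [ContinuousLinearMap.add_apply, ContinuousLinearMap.smul_apply,
    ContinuousLinearMap.flip_apply, smul_eq_mul]
  rw [fderiv_auxPD hΩ hb hx j a, fderiv_auxPD hΩ hb hx j c]
  unfold hess
  ring

/-- contraction symmetry for the third derivative term -/
lemma auxT_contract (hΩ : IsOpen Ω) (hb : ContDiffOn ℝ ∞ b Ω) {x : E} (hx : x ∈ Ω) :
    ∑ i, ∑ j, auxPD b j x * hess (auxPD b j) x (EuclideanSpace.single i (1:ℝ)) (EuclideanSpace.single i (1:ℝ))
    = ∑ l, auxPD b l x * ∑ i, hess (auxPD b i) x (EuclideanSpace.single l (1:ℝ)) (EuclideanSpace.single i (1:ℝ)) := by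
  have key : ∀ i j : Fin n,
      hess (auxPD b j) x (EuclideanSpace.single i (1:ℝ)) (EuclideanSpace.single i (1:ℝ))
      = hess (auxPD b i) x (EuclideanSpace.single j (1:ℝ)) (EuclideanSpace.single i (1:ℝ)) := by
    intro i j
    have h1 := aux_hess_fderiv_swap hΩ hb hx (EuclideanSpace.single i (1:ℝ))
      (EuclideanSpace.single i (1:ℝ)) (EuclideanSpace.single j (1:ℝ))
    -- h1 : hess (pd j) x e_i e_i = hess (pd i) x e_i e_j
    have h2 := aux_hess_symm hΩ (aux_cd_fderiv_apply hΩ hb (EuclideanSpace.single i (1:ℝ))) hx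
      (EuclideanSpace.single i (1:ℝ)) (EuclideanSpace.single j (1:ℝ))
    unfold auxPD
    rw [h1, h2]
  rw [Finset.sum_comm]
  rw [Finset.sum_congr rfl fun j _ => Finset.sum_congr rfl fun i _ => by rw [key i j]]
  exact Finset.sum_congr rfl fun l _ => by rw [Finset.mul_sum]

end W

section EE
variable {Ω : Set (EuclideanSpace ℝ (Fin n))} {f b : EuclideanSpace ℝ (Fin n) → ℝ}

lemma aux_E1 (hΩ : IsOpen Ω) (hb : ContDiffOn ℝ ∞ b Ω)
    (hbpos : ∀ y ∈ Ω, 0 < b y) {k : ℝ} (hk : 2 < k)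
    (hharm : ∀ y ∈ Ω, lapf f (fun z => b z ^ (2 - k)) y = 0)
    {y : E} (hy : y ∈ Ω) :
    lapf f b y = (k-1) * (auxW b y * (b y) ^ (-1:ℝ)) := by
  have h := hharm y hy
  rw [aux_lapf_rpow hΩ f hb hbpos hy (2-k)] at h
  have hB : 0 < b y := hbpos y hy
  have hBne : b y ≠ 0 := ne_of_gt hB
  have e1 : b y ^ (2-k-1) = b y ^ (2-k-2) * b y := by
    rw [show (2-k-1:ℝ) = (2-k-2)+1 by ring, Real.rpow_add_one hBne]
  rw [e1] at h
  have hfac : (2-k) * (b y ^ (2-k-2)) *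
      (b y * lapf f b y - (k-1) * auxW b y) = 0 := by
    have hWdef : auxW b y = ∑ i, (fderiv ℝ b y (EuclideanSpace.single i (1:ℝ)))^2 := rfl
    rw [hWdef]
    linear_combination h
  have h2k : (2-k) * (b y ^ (2-k-2)) ≠ 0 :=
    mul_ne_zero (by linarith) (ne_of_gt (Real.rpow_pos_of_pos hB _))
  have key : b y * lapf f b y - (k-1) * auxW b y = 0 :=
    (mul_eq_zero.mp hfac).resolve_left h2k
  rw [Real.rpow_neg_one]
  field_simp
  linarith [key]

lemma aux_E2 (hΩ : IsOpen Ω) (hf : ContDiffOn ℝ ∞ f Ω) (hb : ContDiffOn ℝ ∞ b Ω)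
    (hbpos : ∀ y ∈ Ω, 0 < b y) {k : ℝ} (hk : 2 < k)
    (hharm : ∀ y ∈ Ω, lapf f (fun z => b z ^ (2 - k)) y = 0)
    {x : E} (hx : x ∈ Ω) (l : Fin n) :
    ∑ i, hess (auxPD b i) x (EuclideanSpace.single l (1:ℝ)) (EuclideanSpace.single i (1:ℝ))
    = (∑ i, (auxPD f i x * hess b x (EuclideanSpace.single l (1:ℝ)) (EuclideanSpace.single i (1:ℝ))
        + auxPD b i x * hess f x (EuclideanSpace.single l (1:ℝ)) (EuclideanSpace.single i (1:ℝ))))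
      + (k-1) * (auxW b x * (-1 * b x ^ (-1-1:ℝ) * auxPD b l x)
        + b x ^ (-1:ℝ) * fderiv ℝ (auxW b) x (EuclideanSpace.single l (1:ℝ))) := by
  have hBne : b x ≠ 0 := ne_of_gt (hbpos x hx)
  -- the three pieces
  have hDA : HasFDerivAt
      (fun y => ∑ i, fderiv ℝ (auxPD b i) y (EuclideanSpace.single i (1:ℝ)))
      (∑ i, (fderiv ℝ (fderiv ℝ (auxPD b i)) x).flip (EuclideanSpace.single i (1:ℝ))) x :=
    HasFDerivAt.fun_sum (fun i _ =>
      aux_hasFDerivAt_fderiv_apply hΩ (aux_cd_fderiv_apply hΩ hb _) hx _)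
  have hDB : HasFDerivAt
      (fun y => ∑ i, fderiv ℝ f y (EuclideanSpace.single i (1:ℝ)) *
        fderiv ℝ b y (EuclideanSpace.single i (1:ℝ)))
      (∑ i, ((fderiv ℝ f x (EuclideanSpace.single i (1:ℝ))) •
          ((fderiv ℝ (fderiv ℝ b) x).flip (EuclideanSpace.single i (1:ℝ)))
        + (fderiv ℝ b x (EuclideanSpace.single i (1:ℝ))) •
          ((fderiv ℝ (fderiv ℝ f) x).flip (EuclideanSpace.single i (1:ℝ))))) x :=
    HasFDerivAt.fun_sum (fun i _ =>
      (aux_hasFDerivAt_fderiv_apply hΩ hf hx _).fun_mul (aux_hasFDerivAt_fderiv_apply hΩ hb hx _))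
  have hrpow : HasFDerivAt (fun y => b y ^ (-1:ℝ))
      ((-1 * b x ^ (-1-1:ℝ)) • fderiv ℝ b x) x :=
    (aux_diffAt hΩ hb hx).hasFDerivAt.rpow_const (Or.inl hBne)
  have hDC : HasFDerivAt (fun y => (k-1) * (auxW b y * b y ^ (-1:ℝ)))
      ((k-1) • ((auxW b x) • ((-1 * b x ^ (-1-1:ℝ)) • fderiv ℝ b x)
        + (b x ^ (-1:ℝ)) • (∑ j, (2 * auxPD b j x) •
          ((fderiv ℝ (fderiv ℝ b) x).flip (EuclideanSpace.single j (1:ℝ)))))) x :=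
    ((auxW_hasFDerivAt hΩ hb hx).mul hrpow).const_mul (k-1)
  have hD := (hDA.fun_sub (hDB.fun_add hDC))
  have hzero : (fun y => (∑ i, fderiv ℝ (auxPD b i) y (EuclideanSpace.single i (1:ℝ)))
      - ((∑ i, fderiv ℝ f y (EuclideanSpace.single i (1:ℝ)) *
          fderiv ℝ b y (EuclideanSpace.single i (1:ℝ)))
        + (k-1) * (auxW b y * b y ^ (-1:ℝ)))) =ᶠ[nhds x] (fun _ => (0:ℝ)) := by
    filter_upwards [hΩ.mem_nhds hx] with y hy
    have hA : (∑ i, fderiv ℝ (auxPD b i) y (EuclideanSpace.single i (1:ℝ))) = lap b y := by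
      unfold lap
      exact Finset.sum_congr rfl fun i _ => fderiv_auxPD hΩ hb hy i _
    have hBsum : (∑ i, fderiv ℝ f y (EuclideanSpace.single i (1:ℝ)) *
        fderiv ℝ b y (EuclideanSpace.single i (1:ℝ))) = ⟪gradient f y, gradient b y⟫ :=
      (aux_gradient_inner_eq f b y).symm
    have hE1 := aux_E1 hΩ hb hbpos hk hharm hy
    rw [hA, hBsum]
    have : lapf f b y = lap b y - ⟪gradient f y, gradient b y⟫ := rfl
    rw [this] at hE1
    linarith [hE1]
  have hfz : fderiv ℝ (fun y => (∑ i, fderiv ℝ (auxPD b i) y (EuclideanSpace.single i (1:ℝ)))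
      - ((∑ i, fderiv ℝ f y (EuclideanSpace.single i (1:ℝ)) *
          fderiv ℝ b y (EuclideanSpace.single i (1:ℝ)))
        + (k-1) * (auxW b y * b y ^ (-1:ℝ)))) x = 0 := by
    rw [hzero.fderiv_eq]
    exact fderiv_const_apply 0
  rw [hD.fderiv] at hfz
  have h1 := congrArg (fun L => L (EuclideanSpace.single l (1:ℝ))) hfz
  simp only [ContinuousLinearMap.sub_apply, ContinuousLinearMap.add_apply,
    ContinuousLinearMap.sum_apply, ContinuousLinearMap.smul_apply,
    ContinuousLinearMap.flip_apply, smul_eq_mul, ContinuousLinearMap.zero_apply] at h1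
  rw [(auxW_hasFDerivAt hΩ hb hx).fderiv, ContinuousLinearMap.sum_apply]
  simp only [ContinuousLinearMap.smul_apply, ContinuousLinearMap.flip_apply, smul_eq_mul]
  unfold hess
  unfold auxPD at h1 ⊢
  linear_combination h1
end EE

end AuxLemmas


local notation "ee" i => EuclideanSpace.single i (1:ℝ)

set_option maxHeartbeats 3200000 in
theorem stmt_7 (Ω : Set (EuclideanSpace ℝ (Fin n))) (hΩ : IsOpen Ω)
    (f b : EuclideanSpace ℝ (Fin n) → ℝ)
    (hf : ContDiffOn ℝ (⊤ : ℕ∞) f Ω) (hb : ContDiffOn ℝ (⊤ : ℕ∞) b Ω)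
    (hbpos : ∀ x ∈ Ω, 0 < b x) (hbgrad : ∀ x ∈ Ω, gradient b x ≠ 0)
    (k : ℝ) (hk : 2 < k)
    (hharm : ∀ x ∈ Ω, lapf f (fun y => b y ^ (2 - k)) x = 0) :
    ∀ q β : ℝ, β ≠ 0 → ∀ x ∈ Ω,
      lapf f (fun y => b y ^ (2 * q) * ‖gradient b y‖ ^ β) x =
        β / 4 * b x ^ (2 * q - 2) * ‖gradient b x‖ ^ (β - 2) *
          (hessNormSq (fun y => b y ^ 2) x +
            hess f x (gradient (fun y => b y ^ 2) x) (gradient (fun y => b y ^ 2) x) +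
            2 * (k - 2 + 2 * q) * ⟪gradient (fun y => b y ^ 2) x,
                                    gradient (fun y => ‖gradient b y‖ ^ 2) x⟫ +
            4 * (β - 2) * b x ^ 2 * ‖gradient (fun y => ‖gradient b y‖) x‖ ^ 2 +
            (8 * q / β * (k - 2 + 2 * q) - 4 * k) * ‖gradient b x‖ ^ 4) := by
  intro q β hβ x hx
  have hf' : ContDiffOn ℝ ∞ f Ω := hf.of_le (by simp)
  have hb' : ContDiffOn ℝ ∞ b Ω := hb.of_le (by simp)
  have hBx : 0 < b x := hbpos x hx
  have hBne : b x ≠ 0 := ne_of_gt hBx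
  have hW0 : 0 < auxW b x := auxW_pos hΩ hx (hbgrad x hx)
  have hWne : auxW b x ≠ 0 := ne_of_gt hW0
  have hWposΩ : ∀ y ∈ Ω, 0 < auxW b y := fun y hy => auxW_pos hΩ hy (hbgrad y hy)
  have hbneΩ : ∀ y ∈ Ω, b y ≠ 0 := fun y hy => ne_of_gt (hbpos y hy)
  have hWneΩ : ∀ y ∈ Ω, auxW b y ≠ 0 := fun y hy => ne_of_gt (hWposΩ y hy)
  have hdb : DifferentiableAt ℝ b x := aux_diffAt hΩ hb' hx
  have hdW : DifferentiableAt ℝ (auxW b) x := aux_diffAt hΩ (auxW_cd hΩ hb') hx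
  -- rpow bookkeeping
  have hq0 : b x ^ (2*q-2) * b x * b x = b x ^ (2*q) := by
    rw [← Real.rpow_add_one hBne, ← Real.rpow_add_one hBne]
    congr 1; ring
  have hq1 : b x ^ (2*q-2) * b x = b x ^ (2*q-1) := by
    rw [← Real.rpow_add_one hBne]; congr 1; ring
  have hw0 : auxW b x ^ (β/2-2) * auxW b x * auxW b x = auxW b x ^ (β/2) := by
    rw [← Real.rpow_add_one hWne, ← Real.rpow_add_one hWne]
    congr 1; ring
  have hw1 : auxW b x ^ (β/2-2) * auxW b x = auxW b x ^ (β/2-1) := by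
    rw [← Real.rpow_add_one hWne]; congr 1; ring
  have hbinv : b x ^ (-1:ℝ) = (b x)⁻¹ := Real.rpow_neg_one _
  have hbinv2 : b x ^ (-1-1:ℝ) = (b x)⁻¹ * (b x)⁻¹ := by
    rw [show (-1-1:ℝ) = (-1) + (-1) by ring, Real.rpow_add hBx, Real.rpow_neg_one]
  -- function rewrites
  have hGfun : (fun y => b y ^ (2*q) * ‖gradient b y‖ ^ β)
      = (fun y => b y ^ (2*q) * auxW b y ^ (β/2)) := by
    funext y
    congr 1
    rw [← auxW_eq b y, ← Real.rpow_natCast ‖gradient b y‖ 2,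
      ← Real.rpow_mul (norm_nonneg _)]
    congr 1
    push_cast; ring
  have hb2fun : (fun y => b y ^ 2) = (fun y => b y * b y) :=
    funext fun y => pow_two (b y)
  have hw2fun : (fun y => ‖gradient b y‖ ^ 2) = auxW b := funext fun y => auxW_eq b y
  have hnormfun : (fun y => ‖gradient b y‖) = (fun y => auxW b y ^ ((1:ℝ)/2)) := by
    funext y
    rw [← auxW_eq b y, ← Real.rpow_natCast ‖gradient b y‖ 2,
      ← Real.rpow_mul (norm_nonneg _)]
    rw [show ((2:ℕ):ℝ) * ((1:ℝ)/2) = 1 by push_cast; ring, Real.rpow_one]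
  -- E1 at x
  have hE1x : lapf f b x = (k-1) * (auxW b x * b x ^ (-1:ℝ)) :=
    aux_E1 hΩ hb' hbpos hk hharm hx
  -- gradient of auxW in coordinates
  have hDw : ∀ l : Fin n, fderiv ℝ (auxW b) x (ee l)
      = ∑ j, 2 * fderiv ℝ b x (ee j) * hess b x (ee l) (ee j) := by
    intro l
    rw [auxW_fderiv_apply hΩ hb' hx (ee l)]
    refine Finset.sum_congr rfl fun j _ => ?_
    rw [fderiv_auxPD hΩ hb' hx j (ee l)]
    simp only [auxPD]
  have rSB : (∑ i, fderiv ℝ b x (ee i) * fderiv ℝ (auxW b) x (ee i))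
      = 2 * ∑ i, ∑ j, fderiv ℝ b x (ee i) * fderiv ℝ b x (ee j) * hess b x (ee i) (ee j) := by
    rw [Finset.mul_sum]
    refine Finset.sum_congr rfl fun i _ => ?_
    rw [hDw i, Finset.mul_sum, Finset.mul_sum]
    exact Finset.sum_congr rfl fun j _ => by ring
  have rNN : (∑ i, fderiv ℝ f x (ee i) * fderiv ℝ (auxW b) x (ee i))
      = 2 * ∑ i, ∑ j, fderiv ℝ f x (ee i) * fderiv ℝ b x (ee j) * hess b x (ee i) (ee j) := by
    rw [Finset.mul_sum]
    refine Finset.sum_congr rfl fun i _ => ?_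
    rw [hDw i, Finset.mul_sum, Finset.mul_sum]
    exact Finset.sum_congr rfl fun j _ => by ring
  -- Laplacian of auxW
  have hlapW : lap (auxW b) x = 2 * (∑ i, ∑ j, (hess b x (ee i) (ee j))^2)
      + 2 * (∑ i, ∑ j, auxPD b j x * hess (auxPD b j) x (ee i) (ee i)) := by
    unfold lap
    have hterm : ∀ i j : Fin n,
        (2 * fderiv ℝ (auxPD b j) x (ee i) * fderiv ℝ (auxPD b j) x (ee i)
          + 2 * auxPD b j x * hess (auxPD b j) x (ee i) (ee i))
        = 2 * ((hess b x (ee i) (ee j))^2)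
          + 2 * (auxPD b j x * hess (auxPD b j) x (ee i) (ee i)) := by
      intro i j
      rw [fderiv_auxPD hΩ hb' hx j (ee i)]
      ring
    rw [Finset.sum_congr rfl fun i _ => auxW_hess hΩ hb' hx (ee i) (ee i)]
    rw [Finset.sum_congr rfl fun i _ => Finset.sum_congr rfl fun j _ => hterm i j]
    simp only [Finset.sum_add_distrib, ← Finset.mul_sum]
  -- contraction of E2
  have hE2' := fun l => aux_E2 hΩ hf' hb' hbpos hk hharm hx l
  have hWx2 : (∑ l, fderiv ℝ b x (ee l) * fderiv ℝ b x (ee l)) = auxW b x := by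
    unfold auxW
    exact Finset.sum_congr rfl fun l _ => (pow_two _).symm
  have hSsum : (∑ i, ∑ j, auxPD b j x * hess (auxPD b j) x (ee i) (ee i))
      = (∑ i, ∑ j, fderiv ℝ f x (ee i) * fderiv ℝ b x (ee j) * hess b x (ee i) (ee j))
        + (∑ i, ∑ j, fderiv ℝ b x (ee i) * fderiv ℝ b x (ee j) * hess f x (ee i) (ee j))
        + (k-1) * (b x ^ (-1:ℝ) * (∑ i, fderiv ℝ b x (ee i) * fderiv ℝ (auxW b) x (ee i))
          - auxW b x * auxW b x * b x ^ (-1-1:ℝ)) := by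
    rw [auxT_contract hΩ hb' hx]
    rw [Finset.sum_congr rfl fun l _ => by rw [hE2' l]]
    have hstep : ∀ l : Fin n, auxPD b l x *
        ((∑ i, (auxPD f i x * hess b x (ee l) (ee i) + auxPD b i x * hess f x (ee l) (ee i)))
          + (k-1) * (auxW b x * (-1 * b x ^ (-1-1:ℝ) * auxPD b l x)
            + b x ^ (-1:ℝ) * fderiv ℝ (auxW b) x (ee l)))
        = ((∑ i, fderiv ℝ b x (ee l) * (fderiv ℝ f x (ee i) * hess b x (ee l) (ee i)))
          + (∑ i, fderiv ℝ b x (ee l) * (fderiv ℝ b x (ee i) * hess f x (ee l) (ee i))))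
          + (((k-1) * (-1 * b x ^ (-1-1:ℝ) * auxW b x))
              * (fderiv ℝ b x (ee l) * fderiv ℝ b x (ee l))
            + ((k-1) * b x ^ (-1:ℝ))
              * (fderiv ℝ b x (ee l) * fderiv ℝ (auxW b) x (ee l))) := by
      intro l
      simp only [auxPD]
      rw [mul_add, Finset.mul_sum]
      rw [Finset.sum_congr rfl fun i _ => mul_add (fderiv ℝ b x (ee l)) _ _]
      rw [Finset.sum_add_distrib]
      ring
    rw [Finset.sum_congr rfl fun l _ => hstep l]
    rw [Finset.sum_add_distrib, Finset.sum_add_distrib, Finset.sum_add_distrib]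
    rw [← Finset.mul_sum, ← Finset.mul_sum, hWx2]
    have hT1 : (∑ l, ∑ i, fderiv ℝ b x (ee l) * (fderiv ℝ f x (ee i) * hess b x (ee l) (ee i)))
        = ∑ i, ∑ j, fderiv ℝ f x (ee i) * fderiv ℝ b x (ee j) * hess b x (ee i) (ee j) := by
      rw [Finset.sum_comm]
      refine Finset.sum_congr rfl fun i _ => Finset.sum_congr rfl fun l _ => ?_
      rw [aux_hess_symm hΩ hb' hx (ee l) (ee i)]
      ring
    have hT2 : (∑ l, ∑ i, fderiv ℝ b x (ee l) * (fderiv ℝ b x (ee i) * hess f x (ee l) (ee i)))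
        = ∑ i, ∑ j, fderiv ℝ b x (ee i) * fderiv ℝ b x (ee j) * hess f x (ee i) (ee j) := by
      rw [Finset.sum_comm]
      refine Finset.sum_congr rfl fun i _ => Finset.sum_congr rfl fun l _ => ?_
      rw [aux_hess_symm hΩ hf' hx (ee l) (ee i)]
      ring
    rw [hT1, hT2]
    ring
  -- weighted laplacian of auxW
  have hlapfW : lapf f (auxW b) x
      = 2 * (∑ i, ∑ j, (hess b x (ee i) (ee j))^2)
        + 2 * (∑ i, ∑ j, fderiv ℝ b x (ee i) * fderiv ℝ b x (ee j) * hess f x (ee i) (ee j))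
        + 2 * (k-1) * (b x ^ (-1:ℝ) * (∑ i, fderiv ℝ b x (ee i) * fderiv ℝ (auxW b) x (ee i))
          - auxW b x * auxW b x * b x ^ (-1-1:ℝ)) := by
    unfold lapf
    rw [aux_gradient_inner_eq f (auxW b) x, hlapW, hSsum, rNN]
    ring
  -- the main function, product and powers
  have hu1 : ContDiffOn ℝ ∞ (fun y => b y ^ (2*q)) Ω := hb'.rpow_const_of_ne hbneΩ
  have hu2 : ContDiffOn ℝ ∞ (fun y => auxW b y ^ (β/2)) Ω :=
    (auxW_cd hΩ hb').rpow_const_of_ne hWneΩ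
  have hmul := aux_lapf_mul hΩ f hu1 hu2 hx
  beta_reduce at hmul
  have hrp1 := aux_lapf_rpow hΩ f hb' hbpos hx (2*q)
  have hrp2 := aux_lapf_rpow hΩ f (auxW_cd hΩ hb') hWposΩ hx (β/2)
  have hWx : (∑ i, (fderiv ℝ b x (ee i))^2) = auxW b x := rfl
  rw [hWx] at hrp1
  have hcross : (∑ i, fderiv ℝ (fun y => b y ^ (2*q)) x (ee i)
        * fderiv ℝ (fun y => auxW b y ^ (β/2)) x (ee i))
      = (2*q*b x^(2*q-1)) * ((β/2)*auxW b x^(β/2-1))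
        * ∑ i, fderiv ℝ b x (ee i) * fderiv ℝ (auxW b) x (ee i) := by
    rw [Finset.mul_sum]
    refine Finset.sum_congr rfl fun i _ => ?_
    rw [aux_fderiv_rpow_apply hdb hBne (2*q) (ee i),
      aux_fderiv_rpow_apply hdW hWne (β/2) (ee i)]
    ring
  -- RHS pieces
  have hgb2 : ∀ i : Fin n, gradient (fun y => b y * b y) x i
      = 2 * b x * fderiv ℝ b x (ee i) := by
    intro i
    rw [aux_gradient_apply, aux_fderiv_mul_apply hdb hdb]
    ring
  have hb2h : ∀ i j : Fin n, hess (fun y => b y * b y) x (ee i) (ee j)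
      = 2 * b x * hess b x (ee i) (ee j) + 2 * (fderiv ℝ b x (ee i) * fderiv ℝ b x (ee j)) := by
    intro i j
    rw [aux_hess_mul hΩ hb' hb' hx]
    ring
  have hHNS : hessNormSq (fun y => b y * b y) x
      = 4 * (b x * b x) * (∑ i, ∑ j, (hess b x (ee i) (ee j))^2)
        + 8 * b x * (∑ i, ∑ j, fderiv ℝ b x (ee i) * fderiv ℝ b x (ee j) * hess b x (ee i) (ee j))
        + 4 * (auxW b x * auxW b x) := by
    unfold hessNormSq
    have hterm : ∀ i j : Fin n, (hess (fun y => b y * b y) x (ee i) (ee j))^2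
        = (4*(b x*b x)) * ((hess b x (ee i) (ee j))^2)
          + (8*(b x)) * (fderiv ℝ b x (ee i) * fderiv ℝ b x (ee j) * hess b x (ee i) (ee j))
          + ((4*(fderiv ℝ b x (ee i) * fderiv ℝ b x (ee i)))
              * (fderiv ℝ b x (ee j) * fderiv ℝ b x (ee j))) := by
      intro i j
      rw [hb2h i j]
      ring
    rw [Finset.sum_congr rfl fun i _ => Finset.sum_congr rfl fun j _ => hterm i j]
    rw [Finset.sum_congr rfl fun i _ => by
      rw [Finset.sum_add_distrib, Finset.sum_add_distrib, ← Finset.mul_sum, ← Finset.mul_sum,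
        ← Finset.mul_sum, hWx2]]
    rw [Finset.sum_add_distrib, Finset.sum_add_distrib, ← Finset.mul_sum, ← Finset.mul_sum]
    rw [← Finset.sum_mul, ← Finset.mul_sum, hWx2]
    ring
  have hHf : hess f x (gradient (fun y => b y * b y) x) (gradient (fun y => b y * b y) x)
      = 4 * (b x * b x)
        * (∑ i, ∑ j, fderiv ℝ b x (ee i) * fderiv ℝ b x (ee j) * hess f x (ee i) (ee j)) := by
    rw [aux_hess_bilin]
    have hterm : ∀ i j : Fin n,
        gradient (fun y => b y * b y) x i * gradient (fun y => b y * b y) x j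
          * hess f x (ee i) (ee j)
        = (4*(b x*b x)) * (fderiv ℝ b x (ee i) * fderiv ℝ b x (ee j) * hess f x (ee i) (ee j)) := by
      intro i j
      rw [hgb2 i, hgb2 j]
      ring
    rw [Finset.sum_congr rfl fun i _ => Finset.sum_congr rfl fun j _ => hterm i j]
    rw [Finset.sum_congr rfl fun i _ => (Finset.mul_sum _ _ _).symm, ← Finset.mul_sum]
  have hInner : ⟪gradient (fun y => b y * b y) x, gradient (auxW b) x⟫
      = 2 * b x * ∑ i, fderiv ℝ b x (ee i) * fderiv ℝ (auxW b) x (ee i) := by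
    rw [aux_inner_eq_sum, Finset.mul_sum]
    refine Finset.sum_congr rfl fun i _ => ?_
    rw [hgb2 i, aux_gradient_apply]
    ring
  have hNorm1 : ‖gradient (fun y => auxW b y ^ ((1:ℝ)/2)) x‖^2
      = (auxW b x)⁻¹ * (∑ i, (fderiv ℝ (auxW b) x (ee i))^2) / 4 := by
    rw [aux_norm_sq_eq_sum]
    have hterm : ∀ i : Fin n, (gradient (fun y => auxW b y ^ ((1:ℝ)/2)) x i)^2
        = (((1:ℝ)/2 * auxW b x ^ ((1:ℝ)/2 - 1))^2) * ((fderiv ℝ (auxW b) x (ee i))^2) := by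
      intro i
      rw [aux_gradient_apply, aux_fderiv_rpow_apply hdW hWne]
      ring
    rw [Finset.sum_congr rfl fun i _ => hterm i, ← Finset.mul_sum]
    have hsq : ((1:ℝ)/2 * auxW b x ^ ((1:ℝ)/2 - 1))^2 = (auxW b x)⁻¹ / 4 := by
      rw [mul_pow, pow_two (auxW b x ^ ((1:ℝ)/2 - 1)), ← Real.rpow_add hW0]
      rw [show ((1:ℝ)/2-1) + ((1:ℝ)/2-1) = (-1:ℝ) by ring, Real.rpow_neg_one]
      ring
    rw [hsq]
    ring
  have h4 : ‖gradient b x‖^4 = auxW b x * auxW b x := by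
    rw [show (4:ℕ) = 2*2 from rfl, pow_mul, auxW_eq b x]
    ring
  have hβ2 : ‖gradient b x‖ ^ (β-2) = auxW b x ^ (β/2-1) := by
    rw [← auxW_eq b x, ← Real.rpow_natCast ‖gradient b x‖ 2, ← Real.rpow_mul (norm_nonneg _)]
    congr 1
    push_cast; ring
  -- assemble
  rw [hGfun, hb2fun, hw2fun, hnormfun]
  rw [hmul, hrp1, hrp2, hE1x, hlapfW, hcross]
  rw [hHNS, hHf, hInner, hNorm1, h4, hβ2]
  rw [rSB, ← hq0, ← hq1, ← hw0, ← hw1]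
  rw [hbinv, hbinv2]
  field_simp
  ring
end

section
/- Let Ω be an open subset of ℝⁿ (n ≥ 1) and let b be a smooth real-valued function on Ω with ∇b ≠ 0 everywhere on Ω. Define the trace-free symmetric bilinear form B = Hess(b²) − (Δ(b²)/n)·⟨·,·⟩, the unit vector field ν = ∇b/|∇b|, the function λ = 2|∇b|² − Δ(b²)/n, and let B(ν) denote the vector field determined by ⟨B(ν), w⟩ = B(ν, w) for all vectors w. Then at every point of Ω, |B(ν)|² = 4b²·|∇(|∇b|)|² + λ² + 4λ·b·⟨∇(|∇b|), ν⟩. -/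
open Real RealInnerProductSpace

variable {n : ℕ}

/-- The Riesz isomorphism from the dual of `ℝⁿ` back to `ℝⁿ`, as a continuous linear map. -/
noncomputable def dualIso {n : ℕ} :
    (StrongDual ℝ (EuclideanSpace ℝ (Fin n))) →L[ℝ] EuclideanSpace ℝ (Fin n) :=
  ((InnerProductSpace.toDual ℝ (EuclideanSpace ℝ (Fin n))).symm.toContinuousLinearEquiv :
    _ →L⋆[ℝ] _)

lemma inner_dualIso_apply (φ : StrongDual ℝ (EuclideanSpace ℝ (Fin n)))
    (w : EuclideanSpace ℝ (Fin n)) : ⟪dualIso φ, w⟫ = φ w :=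
  InnerProductSpace.toDual_symm_apply

lemma inner_gradient_apply (f : EuclideanSpace ℝ (Fin n) → ℝ) (x w : EuclideanSpace ℝ (Fin n)) :
    ⟪gradient f x, w⟫ = fderiv ℝ f x w :=
  InnerProductSpace.toDual_symm_apply

/-- With B = Hess(b²) − (Δ(b²)/n)·g, ν = ∇b/|∇b| and λ = 2|∇b|² − Δ(b²)/n,
one has |B(ν)|² = 4b²·|∇|∇b||² + λ² + 4λb·⟨∇|∇b|, ν⟩. -/
theorem stmt_9 (hn : 1 ≤ n) (Ω : Set (EuclideanSpace ℝ (Fin n))) (hΩ : IsOpen Ω)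
    (b : EuclideanSpace ℝ (Fin n) → ℝ) (hb : ContDiffOn ℝ (⊤ : ℕ∞) b Ω)
    (hbgrad : ∀ x ∈ Ω, gradient b x ≠ 0) :
    ∀ x ∈ Ω, ∀ Bν : EuclideanSpace ℝ (Fin n),
      (∀ w : EuclideanSpace ℝ (Fin n),
          ⟪Bν, w⟫ =
            hess (fun y => b y ^ 2) x (‖gradient b x‖⁻¹ • gradient b x) w -
              lap (fun y => b y ^ 2) x / n *
                ⟪‖gradient b x‖⁻¹ • gradient b x, w⟫) →
      ‖Bν‖ ^ 2 =
        4 * b x ^ 2 * ‖gradient (fun y => ‖gradient b y‖) x‖ ^ 2 +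
          (2 * ‖gradient b x‖ ^ 2 - lap (fun y => b y ^ 2) x / n) ^ 2 +
          4 * (2 * ‖gradient b x‖ ^ 2 - lap (fun y => b y ^ 2) x / n) * b x *
            ⟪gradient (fun y => ‖gradient b y‖) x,
              ‖gradient b x‖⁻¹ • gradient b x⟫ := by
  intro x hx Bν hBν
  have hxn : Ω ∈ nhds x := hΩ.mem_nhds hx
  have hbx : ContDiffAt ℝ (⊤ : ℕ∞) b x := hb.contDiffAt hxn
  have hbdx : DifferentiableAt ℝ b x := hbx.differentiableAt (by simp)
  have hBdiff : DifferentiableAt ℝ (fderiv ℝ b) x :=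
    (hbx.fderiv_right (m := 1) (WithTop.coe_le_coe.mpr le_top)).differentiableAt one_ne_zero
  have hsymm : ∀ v w, hess b x v w = hess b x w v :=
    fun v w => (hbx.isSymmSndFDerivAt (by rw [minSmoothness_of_isRCLikeNormedField]; exact WithTop.coe_le_coe.mpr le_top)).eq v w
  set g : EuclideanSpace ℝ (Fin n) := gradient b x with hgdef
  set r : ℝ := ‖g‖ with hrdef
  have hr0 : 0 < r := norm_pos_iff.mpr (hbgrad x hx)
  set c : ℝ := lap (fun y => b y ^ 2) x / n with hcdef
  -- hessian of b^2
  have hbd : ∀ᶠ y in nhds x, DifferentiableAt ℝ b y := by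
    filter_upwards [hxn] with y hy
    exact (hb.contDiffAt (hΩ.mem_nhds hy)).differentiableAt (by simp)
  have heq : (fun y => fderiv ℝ (fun z => b z ^ 2) y) =ᶠ[nhds x]
      fun y => (2 * b y) • fderiv ℝ b y := by
    filter_upwards [hbd] with y hy
    have h1 : HasFDerivAt (fun z => b z ^ 2) ((2 * b y) • fderiv ℝ b y) y := by
      have := hy.hasFDerivAt.mul hy.hasFDerivAt
      have e : (fun z => b z ^ 2) = fun z => b z * b z := by funext z; ring
      rw [e]
      exact this.congr_fderiv (by rw [two_mul, add_smul])
    exact h1.fderiv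
  have hD2 : HasFDerivAt (fun y => (2 * b y) • fderiv ℝ b y)
      ((2 * b x) • fderiv ℝ (fderiv ℝ b) x +
        (ContinuousLinearMap.smulRight ((2:ℝ) • fderiv ℝ b x) (fderiv ℝ b x))) x :=
    (hbdx.hasFDerivAt.const_mul (2:ℝ)).smul hBdiff.hasFDerivAt
  have hsq : ∀ v w, hess (fun y => b y ^ 2) x v w
      = 2 * b x * hess b x v w + 2 * fderiv ℝ b x v * fderiv ℝ b x w := by
    intro v w
    rw [hess, heq.fderiv_eq, hD2.fderiv]
    simp only [ContinuousLinearMap.add_apply, ContinuousLinearMap.smul_apply,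
      ContinuousLinearMap.smulRight_apply, smul_eq_mul, hess]
  -- gradient of |∇b|
  have hGd : HasFDerivAt (fun y => gradient b y)
      (dualIso.comp (fderiv ℝ (fderiv ℝ b) x)) x :=
    (dualIso.hasFDerivAt (x := fderiv ℝ b x)).comp x hBdiff.hasFDerivAt
  have hq : HasFDerivAt (fun y => (⟪gradient b y, gradient b y⟫:ℝ))
      ((fderivInnerCLM ℝ (g, g)).comp
        ((dualIso.comp (fderiv ℝ (fderiv ℝ b) x)).prod
          (dualIso.comp (fderiv ℝ (fderiv ℝ b) x)))) x := hGd.inner ℝ hGd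
  have hqx : (⟪g, g⟫:ℝ) = r ^ 2 := real_inner_self_eq_norm_sq g
  have hnormfun : (fun y => ‖gradient b y‖)
      = fun y => Real.sqrt (⟪gradient b y, gradient b y⟫:ℝ) := by
    funext y
    rw [real_inner_self_eq_norm_sq, Real.sqrt_sq (norm_nonneg _)]
  have hnorm : HasFDerivAt (fun y => ‖gradient b y‖)
      ((1 / (2 * Real.sqrt (⟪g, g⟫:ℝ))) • ((fderivInnerCLM ℝ (g, g)).comp
        ((dualIso.comp (fderiv ℝ (fderiv ℝ b) x)).prod
          (dualIso.comp (fderiv ℝ (fderiv ℝ b) x))))) x := by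
    rw [hnormfun]
    exact hq.sqrt (by rw [hqx]; positivity)
  have hsqrt : Real.sqrt (⟪g, g⟫:ℝ) = r := by rw [hqx, Real.sqrt_sq hr0.le]
  set h : EuclideanSpace ℝ (Fin n) := gradient (fun y => ‖gradient b y‖) x with hhdef
  have hinner : ∀ w, ⟪h, w⟫ = r⁻¹ * hess b x w g := by
    intro w
    rw [hhdef, inner_gradient_apply, hnorm.fderiv]
    simp only [ContinuousLinearMap.smul_apply, ContinuousLinearMap.comp_apply,
      ContinuousLinearMap.prod_apply, fderivInnerCLM_apply, smul_eq_mul, hsqrt]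
    have hthis : ∀ v : EuclideanSpace ℝ (Fin n),
        (⟪dualIso (fderiv ℝ (fderiv ℝ b) x w), v⟫:ℝ) = hess b x w v :=
      fun v => inner_dualIso_apply _ v
    have h2 : (inner ℝ g (dualIso ((fderiv ℝ (fderiv ℝ b) x) w)) : ℝ) = hess b x w g :=
      (real_inner_comm _ _).trans (hthis g)
    rw [h2, hthis g]
    field_simp
    ring
  -- fderiv b and inner products with g
  have hfb : ∀ w, fderiv ℝ b x w = ⟪g, w⟫ := fun w => (inner_gradient_apply b x w).symm
  -- the key identity : Bν = 2b•h + λ•ν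
  set lam : ℝ := 2 * r ^ 2 - c with hlamdef
  have hBg : Bν = (2 * b x) • h + lam • (r⁻¹ • g) := by
    apply ext_inner_right ℝ
    intro w
    rw [hBν w, hsq]
    have e1 : hess b x (r⁻¹ • g) w = r⁻¹ * hess b x g w := by
      simp [hess, smul_eq_mul]
    have e2 : hess b x g w = r * ⟪h, w⟫ := by
      rw [hinner w, hsymm g w]
      field_simp
    have e3 : fderiv ℝ b x (r⁻¹ • g) = r⁻¹ * r ^ 2 := by
      rw [hfb, real_inner_smul_right, hqx]
    have e4 : (⟪r⁻¹ • g, w⟫:ℝ) = r⁻¹ * ⟪g, w⟫ := real_inner_smul_left g w r⁻¹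
    rw [e1, e2, e3, e4, hfb w]
    rw [inner_add_left, real_inner_smul_left, real_inner_smul_left, real_inner_smul_left,
      hinner w, hsymm w g, hlamdef]
    field_simp
    ring
  -- final computation
  rw [hBg, norm_add_sq_real]
  have f1 : ‖(2 * b x) • h‖ ^ 2 = 4 * b x ^ 2 * ‖h‖ ^ 2 := by
    rw [norm_smul, mul_pow, Real.norm_eq_abs, sq_abs]
    ring
  have f2 : ‖lam • (r⁻¹ • g)‖ ^ 2 = lam ^ 2 := by
    rw [norm_smul, norm_smul, norm_inv, norm_norm, ← hrdef, inv_mul_cancel₀ hr0.ne',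
      mul_one, Real.norm_eq_abs, sq_abs]
  have f3 : (⟪(2 * b x) • h, lam • (r⁻¹ • g)⟫:ℝ) = 2 * b x * lam * ⟪h, r⁻¹ • g⟫ := by
    rw [real_inner_smul_left, real_inner_smul_right]
    ring
  rw [f1, f2, f3]
  ring
end

section
/- Let V be an n-dimensional real inner product space with n ≥ 2, let B be a symmetric bilinear form on V whose trace (with respect to any orthonormal basis) is zero, and let ν ∈ V be a unit vector. Let B(ν) ∈ V be the unique vector with ⟨B(ν), w⟩ = B(ν, w) for all w ∈ V, let B(ν)^T = B(ν) − B(ν,ν)·ν be its component orthogonal to ν, let B₀ and g₀ be the restrictions of B and of the inner product to the orthogonal complement ν^⊥, and let tr B₀ be the trace of B₀ on ν^⊥. Then |B|² = (n/(n−1))·|B(ν)|² + ((n−2)/(n−1))·|B(ν)^T|² + |B₀ − (tr B₀/(n−1))·g₀|², where |·|² applied to a bilinear form denotes the squared Frobenius norm (the sum of the squares of its entries in an orthonormal basis of the relevant space). -/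
/-!
The Frobenius norm and the trace of a bilinear form do not depend on the orthonormal basis, so
everything can be computed in the basis `ν, e₀` adapted to `ν`. There, with `b = B(ν, ν)`,
`|B|² = b² + 2 |B(ν)ᵀ|² + |B₀|²` and `|B(ν)|² = b² + |B(ν)ᵀ|²`; trace-freeness gives
`tr B₀ = -b`, hence `|B₀ - (tr B₀/(n-1)) g₀|² = |B₀|² - b²/(n-1)`, and the identity is algebra.
-/

open RealInnerProductSpace Submodule

namespace OrthonormalBasis

variable {ι κ V : Type*} [Fintype ι] [Fintype κ] [NormedAddCommGroup V] [InnerProductSpace ℝ V]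

theorem sum_inner_mul_apply (a : OrthonormalBasis ι ℝ V) (f : V →ₗ[ℝ] ℝ) (y : V) :
    ∑ i, ⟪y, a i⟫ * f (a i) = f y := by
  conv_rhs => rw [← a.sum_repr' y]
  simp [map_sum, real_inner_comm]

theorem sum_apply_self_eq (a : OrthonormalBasis ι ℝ V) (b : OrthonormalBasis κ ℝ V)
    (B : V →ₗ[ℝ] V →ₗ[ℝ] ℝ) : ∑ i, B (a i) (a i) = ∑ j, B (b j) (b j) := by
  calc ∑ i, B (a i) (a i)
      = ∑ i, ∑ j, ⟪a i, b j⟫ * B (a i) (b j) :=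
        Finset.sum_congr rfl fun i _ => (b.sum_inner_mul_apply (B (a i)) (a i)).symm
    _ = ∑ j, ∑ i, ⟪b j, a i⟫ * B.flip (b j) (a i) := by
        rw [Finset.sum_comm]
        simp only [real_inner_comm, LinearMap.flip_apply]
    _ = ∑ j, B (b j) (b j) :=
        Finset.sum_congr rfl fun j _ => a.sum_inner_mul_apply (B.flip (b j)) (b j)

theorem sum_sq_apply_eq (a : OrthonormalBasis ι ℝ V) (b : OrthonormalBasis κ ℝ V)
    (f : V →ₗ[ℝ] ℝ) : ∑ i, f (a i) ^ 2 = ∑ j, f (b j) ^ 2 := by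
  simpa [sq] using a.sum_apply_self_eq b (LinearMap.smulRight f f)

theorem sum_sum_sq_apply_eq (a : OrthonormalBasis ι ℝ V) (b : OrthonormalBasis κ ℝ V)
    (B : V →ₗ[ℝ] V →ₗ[ℝ] ℝ) :
    ∑ i, ∑ j, B (a i) (a j) ^ 2 = ∑ i, ∑ j, B (b i) (b j) ^ 2 := by
  calc ∑ i, ∑ j, B (a i) (a j) ^ 2
      = ∑ i, ∑ j, B.flip (b j) (a i) ^ 2 :=
        Finset.sum_congr rfl fun i _ => a.sum_sq_apply_eq b (B (a i))
    _ = ∑ j, ∑ i, B.flip (b j) (b i) ^ 2 := by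
        rw [Finset.sum_comm]
        exact Finset.sum_congr rfl fun j _ => a.sum_sq_apply_eq b (B.flip (b j))
    _ = ∑ i, ∑ j, B (b i) (b j) ^ 2 := Finset.sum_comm

variable {ν : V}

theorem orthonormal_option_elim (hν : ‖ν‖ = 1) (e₀ : OrthonormalBasis ι ℝ (ℝ ∙ ν)ᗮ) :
    Orthonormal ℝ (fun o : Option ι => o.elim ν fun i => (e₀ i : V)) := by
  classical
  have hνe₀ (i : ι) : ⟪ν, (e₀ i : V)⟫ = 0 :=
    (mem_orthogonal_singleton_iff_inner_right).1 (e₀ i).2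
  rw [orthonormal_iff_ite]
  rintro (_ | i) (_ | j)
  · simp [hν]
  · simp [hνe₀]
  · simp [real_inner_comm, hνe₀]
  · simp [← Submodule.coe_inner, e₀.inner_eq_ite]

variable [FiniteDimensional ℝ V]

noncomputable def consOrthogonal (hν : ‖ν‖ = 1) (e₀ : OrthonormalBasis ι ℝ (ℝ ∙ ν)ᗮ) :
    OrthonormalBasis (Option ι) ℝ V :=
  OrthonormalBasis.mk (orthonormal_option_elim hν e₀) <| by
    refine ((orthonormal_option_elim hν e₀).linearIndependent
      |>.span_eq_top_of_card_eq_finrank' ?_).ge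
    have hν0 : ν ≠ 0 := by rintro rfl; simp at hν
    rw [Fintype.card_option, ← finrank_add_finrank_orthogonal (ℝ ∙ ν),
      finrank_span_singleton hν0, Module.finrank_eq_card_basis e₀.toBasis, add_comm]

@[simp] theorem consOrthogonal_none (hν : ‖ν‖ = 1) (e₀ : OrthonormalBasis ι ℝ (ℝ ∙ ν)ᗮ) :
    consOrthogonal hν e₀ none = ν := by
  simp [consOrthogonal]

@[simp] theorem consOrthogonal_some (hν : ‖ν‖ = 1) (e₀ : OrthonormalBasis ι ℝ (ℝ ∙ ν)ᗮ)
    (i : ι) : consOrthogonal hν e₀ (some i) = e₀ i := by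
  simp [consOrthogonal]

theorem sum_sum_sq_consOrthogonal (hν : ‖ν‖ = 1) (e₀ : OrthonormalBasis ι ℝ (ℝ ∙ ν)ᗮ)
    (B : V →ₗ[ℝ] V →ₗ[ℝ] ℝ) (hB : ∀ v w, B v w = B w v) :
    ∑ i, ∑ j, B (consOrthogonal hν e₀ i) (consOrthogonal hν e₀ j) ^ 2 =
      B ν ν ^ 2 + 2 * ∑ k, B ν (e₀ k) ^ 2 + ∑ i, ∑ j, B (e₀ i) (e₀ j) ^ 2 := by
  simp only [Fintype.sum_option, consOrthogonal_none, consOrthogonal_some,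
    Finset.sum_add_distrib, hB _ ν]
  ring

theorem sum_apply_self_consOrthogonal (hν : ‖ν‖ = 1) (e₀ : OrthonormalBasis ι ℝ (ℝ ∙ ν)ᗮ)
    (B : V →ₗ[ℝ] V →ₗ[ℝ] ℝ) :
    ∑ i, B (consOrthogonal hν e₀ i) (consOrthogonal hν e₀ i) = B ν ν + ∑ i, B (e₀ i) (e₀ i) := by
  simp [Fintype.sum_option]

theorem norm_sq_eq_inner_sq_add_sum_orthogonal (hν : ‖ν‖ = 1)
    (e₀ : OrthonormalBasis ι ℝ (ℝ ∙ ν)ᗮ) (x : V) :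
    ‖x‖ ^ 2 = ⟪x, ν⟫ ^ 2 + ∑ k, ⟪x, e₀ k⟫ ^ 2 := by
  simp [← (consOrthogonal hν e₀).sum_sq_inner_left x, Fintype.sum_option]

end OrthonormalBasis

theorem norm_sub_inner_smul_sq {V : Type*} [NormedAddCommGroup V] [InnerProductSpace ℝ V]
    {ν : V} (hν : ‖ν‖ = 1) (x : V) : ‖x - ⟪x, ν⟫ • ν‖ ^ 2 = ‖x‖ ^ 2 - ⟪x, ν⟫ ^ 2 := by
  rw [norm_sub_sq_real, real_inner_smul_right, norm_smul, hν, Real.norm_eq_abs, mul_one, sq_abs]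
  ring

theorem Orthonormal.sum_sum_sq_sub_mul_inner {ι E : Type*} [Fintype ι] [NormedAddCommGroup E]
    [InnerProductSpace ℝ E] {v : ι → E} (hv : Orthonormal ℝ v) (C : ι → ι → ℝ) (c : ℝ) :
    ∑ i, ∑ j, (C i j - c * ⟪v i, v j⟫) ^ 2 =
      ∑ i, ∑ j, C i j ^ 2 - 2 * c * ∑ i, C i i + Fintype.card ι * c ^ 2 := by
  classical
  have hexpand (i j : ι) : (C i j - c * ⟪v i, v j⟫) ^ 2 =
      C i j ^ 2 - (if i = j then 2 * c * C i j else 0) + (if i = j then c ^ 2 else 0) := by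
    rw [orthonormal_iff_ite.1 hv]
    split_ifs <;> ring
  simp only [hexpand, Finset.sum_add_distrib, Finset.sum_sub_distrib, Finset.sum_ite_eq,
    Finset.mem_univ, if_true, Finset.mul_sum, Finset.sum_const, Finset.card_univ, nsmul_eq_mul]

theorem stmt_10_general {V : Type*} [NormedAddCommGroup V] [InnerProductSpace ℝ V]
    (n : ℕ) (hn : 2 ≤ n)
    (B : V →ₗ[ℝ] V →ₗ[ℝ] ℝ) (hsymm : ∀ v w : V, B v w = B w v)
    (e : OrthonormalBasis (Fin n) ℝ V)
    (htrace : ∑ i, B (e i) (e i) = 0)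
    (ν : V) (hν : ‖ν‖ = 1)
    (Bν : V) (hBν : ∀ w : V, ⟪Bν, w⟫ = B ν w)
    (e₀ : OrthonormalBasis (Fin (n - 1)) ℝ ((ℝ ∙ ν)ᗮ)) :
    ∑ i, ∑ j, (B (e i) (e j)) ^ 2 =
      (n / (n - 1) : ℝ) * ‖Bν‖ ^ 2 +
        ((n - 2) / (n - 1) : ℝ) * ‖Bν - (B ν ν) • ν‖ ^ 2 +
        ∑ i, ∑ j, (B (e₀ i : V) (e₀ j : V) -
          (∑ l, B (e₀ l : V) (e₀ l : V)) / (n - 1 : ℝ) *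
            ⟪(e₀ i : V), (e₀ j : V)⟫) ^ 2 := by
  have : FiniteDimensional ℝ V := e.toBasis.finiteDimensional_of_finite
  have htrace₀ : B ν ν + ∑ l, B (e₀ l : V) (e₀ l : V) = 0 := by
    rw [← OrthonormalBasis.sum_apply_self_consOrthogonal hν e₀ B,
      (OrthonormalBasis.consOrthogonal hν e₀).sum_apply_self_eq e, htrace]
  have hnorm : ‖Bν‖ ^ 2 = B ν ν ^ 2 + ∑ k, B ν (e₀ k) ^ 2 := by
    simp only [OrthonormalBasis.norm_sq_eq_inner_sq_add_sum_orthogonal hν e₀, hBν]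
  have he₀ : Orthonormal ℝ fun i ↦ (e₀ i : V) :=
    e₀.orthonormal.comp_linearIsometry (ℝ ∙ ν)ᗮ.subtypeₗᵢ
  have hm : ((n - 1 : ℕ) : ℝ) = n - 1 := by push_cast [show 1 ≤ n by omega]; ring
  have hm0 : (n - 1 : ℝ) ≠ 0 := by rw [← hm]; norm_cast; omega
  rw [e.sum_sum_sq_apply_eq (OrthonormalBasis.consOrthogonal hν e₀),
    OrthonormalBasis.sum_sum_sq_consOrthogonal hν e₀ B hsymm, ← hBν ν,
    norm_sub_inner_smul_sq hν, hBν, he₀.sum_sum_sq_sub_mul_inner, hnorm, Fintype.card_fin, hm]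
  field_simp
  linear_combination (∑ l, B (e₀ l : V) (e₀ l : V) - B ν ν) * htrace₀

/-- Decomposition of the squared Frobenius norm of a trace-free symmetric bilinear
form `B` relative to a unit vector `ν`:
`|B|² = (n/(n−1))·|B(ν)|² + ((n−2)/(n−1))·|B(ν)ᵀ|² + |B₀ − (tr B₀/(n−1))·g₀|²`. -/
theorem stmt_10 {V : Type*} [NormedAddCommGroup V] [InnerProductSpace ℝ V]
    (n : ℕ) (hn : 2 ≤ n) (hdim : Module.finrank ℝ V = n)
    (B : V →ₗ[ℝ] V →ₗ[ℝ] ℝ) (hsymm : ∀ v w : V, B v w = B w v)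
    (e : OrthonormalBasis (Fin n) ℝ V)
    (htrace : ∑ i, B (e i) (e i) = 0)
    (ν : V) (hν : ‖ν‖ = 1)
    (Bν : V) (hBν : ∀ w : V, ⟪Bν, w⟫ = B ν w)
    (e₀ : OrthonormalBasis (Fin (n - 1)) ℝ ((ℝ ∙ ν)ᗮ)) :
    ∑ i, ∑ j, (B (e i) (e j)) ^ 2 =
      (n / (n - 1) : ℝ) * ‖Bν‖ ^ 2 +
        ((n - 2) / (n - 1) : ℝ) * ‖Bν - (B ν ν) • ν‖ ^ 2 +
        ∑ i, ∑ j, (B (e₀ i : V) (e₀ j : V) -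
          (∑ l, B (e₀ l : V) (e₀ l : V)) / (n - 1 : ℝ) *
            ⟪(e₀ i : V), (e₀ j : V)⟫) ^ 2 :=
  stmt_10_general n hn B hsymm e htrace ν hν Bν hBν e₀
end

section
/- Let Ω be an open subset of ℝⁿ (n ≥ 2) and let b be a smooth real-valued function on Ω with ∇b ≠ 0 everywhere on Ω. Define B = Hess(b²) − (Δ(b²)/n)·⟨·,·⟩, ν = ∇b/|∇b|, and λ = 2|∇b|² − Δ(b²)/n. If at a point x ∈ Ω either λ(x) = 0 or ⟨∇(|∇b|)(x), ν(x)⟩ = 0, then at x one has |B|² ≥ (4n/(n−1))·b²·|∇(|∇b|)|², where |B|² is the squared Frobenius norm of the bilinear form B. -/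
open Real RealInnerProductSpace

variable {n : ℕ}

lemma pair_with_A (hn1 : (1:ℝ) ≤ (n:ℝ) - 1) (M : Fin n → Fin n → ℝ) (v u : Fin n → ℝ)
    (β : ℝ) (hsym : ∀ i j, M i j = M j i) (htr : ∑ i, M i i = 0)
    (hv : ∑ i, (v i) ^ 2 = 1) (huv : ∑ i, u i * v i = 0)
    (hMv : ∀ i, ∑ j, M i j * v j = β * v i + u i) :
    ∑ i, ∑ j, M i j * (β * ((n : ℝ) * v i * v j - (if i = j then 1 else 0)) / ((n:ℝ) - 1)
        + v i * u j + u i * v j)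
      = ((n:ℝ) / ((n:ℝ) - 1)) * β ^ 2 + 2 * ∑ i, (u i) ^ 2 := by
  have hne : ((n:ℝ) - 1) ≠ 0 := by linarith
  have T1 : ∑ i, ∑ j, M i j * (v i * v j) = β := by
    calc ∑ i, ∑ j, M i j * (v i * v j) = ∑ i, v i * ∑ j, M i j * v j := by
          refine Finset.sum_congr rfl fun i _ => ?_
          rw [Finset.mul_sum]; exact Finset.sum_congr rfl fun j _ => by ring
      _ = ∑ i, (β * (v i)^2 + u i * v i) := by
          refine Finset.sum_congr rfl fun i _ => ?_; rw [hMv i]; ring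
      _ = β * (∑ i, (v i)^2) + ∑ i, u i * v i := by
          rw [Finset.sum_add_distrib, Finset.mul_sum]
      _ = β := by rw [hv, huv]; ring
  have T2 : ∑ i, ∑ j, M i j * (if i = j then (1:ℝ) else 0) = 0 := by
    have h : ∀ i : Fin n, ∑ j, M i j * (if i = j then (1:ℝ) else 0) = M i i := by
      intro i
      rw [Finset.sum_eq_single i]
      · simp
      · intro j _ hji; simp [Ne.symm hji]
      · simp
    simp_rw [h]; exact htr
  have T3 : ∑ i, ∑ j, M i j * (v i * u j) = ∑ i, (u i)^2 := by
    calc ∑ i, ∑ j, M i j * (v i * u j) = ∑ j, ∑ i, M i j * (v i * u j) := Finset.sum_comm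
      _ = ∑ j, u j * ∑ i, M j i * v i := by
          refine Finset.sum_congr rfl fun j _ => ?_
          rw [Finset.mul_sum]; exact Finset.sum_congr rfl fun i _ => by rw [hsym i j]; ring
      _ = ∑ j, u j * (β * v j + u j) := by simp_rw [hMv]
      _ = ∑ j, (β * (u j * v j) + (u j)^2) := Finset.sum_congr rfl fun j _ => by ring
      _ = β * (∑ j, u j * v j) + ∑ j, (u j)^2 := by rw [Finset.sum_add_distrib, Finset.mul_sum]
      _ = ∑ j, (u j)^2 := by rw [huv]; ring
  have T4 : ∑ i, ∑ j, M i j * (u i * v j) = ∑ i, (u i)^2 := by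
    calc ∑ i, ∑ j, M i j * (u i * v j) = ∑ i, u i * ∑ j, M i j * v j := by
          refine Finset.sum_congr rfl fun i _ => ?_
          rw [Finset.mul_sum]; exact Finset.sum_congr rfl fun j _ => by ring
      _ = ∑ i, u i * (β * v i + u i) := by simp_rw [hMv]
      _ = ∑ i, (β * (u i * v i) + (u i)^2) := Finset.sum_congr rfl fun i _ => by ring
      _ = β * (∑ i, u i * v i) + ∑ i, (u i)^2 := by rw [Finset.sum_add_distrib, Finset.mul_sum]
      _ = ∑ i, (u i)^2 := by rw [huv]; ring
  have point : ∀ i j, M i j * (β * ((n : ℝ) * v i * v j - (if i = j then 1 else 0)) / ((n:ℝ) - 1)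
        + v i * u j + u i * v j)
      = (β * (n:ℝ) / ((n:ℝ)-1)) * (M i j * (v i * v j))
        - (β / ((n:ℝ)-1)) * (M i j * (if i = j then (1:ℝ) else 0))
        + M i j * (v i * u j) + M i j * (u i * v j) := by
    intro i j; by_cases h : i = j <;> simp only [h, if_true, if_neg] <;> [skip; simp [h]] <;>
      field_simp <;> ring
  calc ∑ i, ∑ j, M i j * (β * ((n : ℝ) * v i * v j - (if i = j then 1 else 0)) / ((n:ℝ) - 1)
        + v i * u j + u i * v j)
      = ∑ i, ∑ j, ((β * (n:ℝ) / ((n:ℝ)-1)) * (M i j * (v i * v j))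
        - (β / ((n:ℝ)-1)) * (M i j * (if i = j then (1:ℝ) else 0))
        + M i j * (v i * u j) + M i j * (u i * v j)) := by
        exact Finset.sum_congr rfl fun i _ => Finset.sum_congr rfl fun j _ => point i j
    _ = (β * (n:ℝ) / ((n:ℝ)-1)) * (∑ i, ∑ j, M i j * (v i * v j))
        - (β / ((n:ℝ)-1)) * (∑ i, ∑ j, M i j * (if i = j then (1:ℝ) else 0))
        + (∑ i, ∑ j, M i j * (v i * u j)) + (∑ i, ∑ j, M i j * (u i * v j)) := by
        simp only [Finset.sum_add_distrib, Finset.sum_sub_distrib, ← Finset.mul_sum]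
    _ = ((n:ℝ) / ((n:ℝ) - 1)) * β ^ 2 + 2 * ∑ i, (u i) ^ 2 := by
        rw [T1, T2, T3, T4]; field_simp; ring

lemma alg_key (hn : 2 ≤ n) (B : Fin n → Fin n → ℝ) (v u : Fin n → ℝ) (β : ℝ)
    (hsym : ∀ i j, B i j = B j i) (htr : ∑ i, B i i = 0)
    (hv : ∑ i, (v i) ^ 2 = 1) (huv : ∑ i, u i * v i = 0)
    (hBv : ∀ i, ∑ j, B i j * v j = β * v i + u i) :
    ∑ i, ∑ j, (B i j) ^ 2 ≥ ((n:ℝ) / ((n:ℝ) - 1)) * β ^ 2 + 2 * ∑ i, (u i) ^ 2 := by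
  have hn1 : (1:ℝ) ≤ (n:ℝ) - 1 := by
    have : (2:ℝ) ≤ (n:ℝ) := by exact_mod_cast hn
    linarith
  have hne : ((n:ℝ) - 1) ≠ 0 := by linarith
  set A : Fin n → Fin n → ℝ := fun i j =>
    β * ((n : ℝ) * v i * v j - (if i = j then 1 else 0)) / ((n:ℝ) - 1) + v i * u j + u i * v j
    with hA
  have hAsym : ∀ i j, A i j = A j i := by
    intro i j
    have : (if i = j then (1:ℝ) else 0) = (if j = i then (1:ℝ) else 0) := by
      by_cases h : i = j <;> simp [h, Ne.symm, eq_comm]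
    simp only [hA]; rw [this]; ring
  have hdiag : ∀ i : Fin n, ∑ j, (if i = j then (1:ℝ) else 0) * v j = v i := by
    intro i
    rw [Finset.sum_eq_single i]
    · simp
    · intro j _ hji; simp [Ne.symm hji]
    · simp
  have hAv : ∀ i, ∑ j, A i j * v j = β * v i + u i := by
    intro i
    have expand : ∀ j, A i j * v j
        = (β * (n:ℝ) * v i / ((n:ℝ)-1)) * (v j)^2
          - (β / ((n:ℝ)-1)) * ((if i = j then (1:ℝ) else 0) * v j)
          + v i * (u j * v j) + u i * (v j)^2 := by
      intro j
      by_cases h : i = j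
      · subst h; simp only [hA, if_pos rfl]; field_simp
      · simp only [hA, if_neg h]; field_simp
    simp_rw [expand]
    rw [Finset.sum_add_distrib, Finset.sum_add_distrib, Finset.sum_sub_distrib,
      ← Finset.mul_sum, ← Finset.mul_sum, ← Finset.mul_sum, ← Finset.mul_sum, hv, huv, hdiag i]
    field_simp; ring
  have hAtr : ∑ i, A i i = 0 := by
    have expand : ∀ i : Fin n, A i i
        = (β * (n:ℝ) / ((n:ℝ)-1)) * (v i)^2 - (β / ((n:ℝ)-1)) * ((if i = i then (1:ℝ) else 0))
          + 2 * (u i * v i) := by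
      intro i; simp only [hA]; field_simp; ring
    simp_rw [expand]
    rw [Finset.sum_add_distrib, Finset.sum_sub_distrib, ← Finset.mul_sum, ← Finset.mul_sum,
      ← Finset.mul_sum, hv, huv]
    simp only [if_true, Finset.sum_const, Finset.card_univ, Fintype.card_fin, nsmul_eq_mul,
      mul_one]
    field_simp; ring
  set K : ℝ := ((n:ℝ) / ((n:ℝ) - 1)) * β ^ 2 + 2 * ∑ i, (u i) ^ 2 with hK
  have hBA : ∑ i, ∑ j, B i j * A i j = K :=
    pair_with_A hn1 B v u β hsym htr hv huv hBv
  have hAA : ∑ i, ∑ j, A i j * A i j = K :=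
    pair_with_A hn1 A v u β hAsym hAtr hv huv hAv
  have hK0 : 0 ≤ K := by
    have h1 : (0:ℝ) ≤ ((n:ℝ) / ((n:ℝ) - 1)) * β ^ 2 := by positivity
    have h2 : (0:ℝ) ≤ ∑ i, (u i) ^ 2 := Finset.sum_nonneg fun i _ => sq_nonneg _
    rw [hK]; linarith
  rcases eq_or_lt_of_le hK0 with h0 | hpos
  · rw [← h0]
    exact Finset.sum_nonneg fun i _ => Finset.sum_nonneg fun j _ => sq_nonneg _
  · -- Cauchy-Schwarz
    have cs : (∑ p : Fin n × Fin n, B p.1 p.2 * A p.1 p.2) ^ 2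
        ≤ (∑ p : Fin n × Fin n, (B p.1 p.2) ^ 2) * (∑ p : Fin n × Fin n, (A p.1 p.2) ^ 2) :=
      Finset.sum_mul_sq_le_sq_mul_sq _ _ _
    rw [Fintype.sum_prod_type] at cs
    rw [Fintype.sum_prod_type] at cs
    rw [Fintype.sum_prod_type] at cs
    have hAA' : ∑ i, ∑ j, (A i j) ^ 2 = K := by
      rw [← hAA]
      exact Finset.sum_congr rfl fun i _ => Finset.sum_congr rfl fun j _ => pow_two (A i j)
    rw [hBA, hAA'] at cs
    have h2 : K * K ≤ (∑ i, ∑ j, (B i j) ^ 2) * K := by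
      calc K * K = K ^ 2 := (pow_two K).symm
        _ ≤ _ := cs
    exact le_of_mul_le_mul_right h2 hpos

lemma alg_main (hn : 2 ≤ n) (B : Fin n → Fin n → ℝ) (v w : Fin n → ℝ) (c lam : ℝ)
    (hsym : ∀ i j, B i j = B j i) (htr : ∑ i, B i i = 0)
    (hv : ∑ i, (v i) ^ 2 = 1)
    (hBv : ∀ i, ∑ j, B i j * v j = c * w i + lam * v i)
    (hcase : lam = 0 ∨ ∑ i, w i * v i = 0) :
    ∑ i, ∑ j, (B i j) ^ 2 ≥ ((n:ℝ) / ((n:ℝ) - 1)) * c ^ 2 * ∑ i, (w i) ^ 2 := by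
  have hn1 : (1:ℝ) ≤ (n:ℝ) - 1 := by
    have : (2:ℝ) ≤ (n:ℝ) := by exact_mod_cast hn
    linarith
  have hne : ((n:ℝ) - 1) ≠ 0 := by linarith
  set q : ℝ := (n:ℝ) / ((n:ℝ) - 1) with hq
  have hq0 : 0 ≤ q := by rw [hq]; positivity
  have hq2 : q ≤ 2 := by
    rw [hq, div_le_iff₀ (by linarith)]
    have : (2:ℝ) ≤ (n:ℝ) := by exact_mod_cast hn
    linarith
  set P : ℝ := ∑ i, w i * v i with hP
  set u : Fin n → ℝ := fun i => c * (w i - P * v i) with hu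
  have huv : ∑ i, u i * v i = 0 := by
    have : ∀ i, u i * v i = c * (w i * v i) - (c * P) * (v i)^2 := by
      intro i; rw [hu]; ring
    simp_rw [this]
    rw [Finset.sum_sub_distrib, ← Finset.mul_sum, ← Finset.mul_sum, hv, ← hP]
    ring
  have hBv' : ∀ i, ∑ j, B i j * v j = (c * P + lam) * v i + u i := by
    intro i; rw [hBv i, hu]; ring
  have key := alg_key hn B v u (c * P + lam) hsym htr hv huv hBv'
  rw [← hq] at key
  have hu2 : ∑ i, (u i) ^ 2 = c ^ 2 * (∑ i, (w i) ^ 2 - P ^ 2) := by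
    have : ∀ i, (u i) ^ 2
        = c^2 * (w i)^2 - (2 * c^2 * P) * (w i * v i) + (c^2 * P^2) * (v i)^2 := by
      intro i; rw [hu]; ring
    simp_rw [this]
    rw [Finset.sum_add_distrib, Finset.sum_sub_distrib, ← Finset.mul_sum, ← Finset.mul_sum,
      ← Finset.mul_sum, hv, ← hP]
    ring
  have hPw : P ^ 2 ≤ ∑ i, (w i) ^ 2 := by
    have cs : (∑ i, w i * v i) ^ 2 ≤ (∑ i, (w i) ^ 2) * (∑ i, (v i) ^ 2) :=
      Finset.sum_mul_sq_le_sq_mul_sq _ _ _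
    rw [hv, mul_one] at cs
    rw [hP]; exact cs
  have hc2 : (0:ℝ) ≤ c ^ 2 := sq_nonneg c
  rw [hu2] at key
  rcases hcase with h0 | h0
  · -- lam = 0
    subst h0
    have hgap : (2 - q) * (c^2 * (∑ i, (w i)^2 - P^2)) ≥ 0 :=
      mul_nonneg (by linarith) (mul_nonneg hc2 (by linarith))
    calc ∑ i, ∑ j, (B i j) ^ 2
        ≥ q * (c * P + 0) ^ 2 + 2 * (c ^ 2 * (∑ i, (w i) ^ 2 - P ^ 2)) := key
      _ ≥ q * c ^ 2 * ∑ i, (w i) ^ 2 := by nlinarith [hgap, sq_nonneg (c * P)]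
  · -- P = 0
    rw [h0] at key
    have hq2' : 0 ≤ q * (c * 0 + lam) ^ 2 := by positivity
    calc ∑ i, ∑ j, (B i j) ^ 2
        ≥ q * (c * 0 + lam) ^ 2 + 2 * (c ^ 2 * (∑ i, (w i) ^ 2 - 0 ^ 2)) := key
      _ ≥ q * c ^ 2 * ∑ i, (w i) ^ 2 := by
          have hS : (0:ℝ) ≤ ∑ i, (w i) ^ 2 := Finset.sum_nonneg fun i _ => sq_nonneg _
          nlinarith [mul_nonneg (mul_nonneg (by linarith : (0:ℝ) ≤ 2 - q) hc2) hS]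

lemma grad_pair (f : EuclideanSpace ℝ (Fin n) → ℝ) (x z : EuclideanSpace ℝ (Fin n)) :
    ⟪gradient f x, z⟫ = fderiv ℝ f x z :=
  InnerProductSpace.toDual_symm_apply

lemma euclid_decomp (a : EuclideanSpace ℝ (Fin n)) :
    a = ∑ j, a j • (EuclideanSpace.single j 1 : EuclideanSpace ℝ (Fin n)) := by
  ext i
  rw [WithLp.ofLp_sum, Finset.sum_apply]
  simp [EuclideanSpace.single_apply]

lemma clm_decomp (T : EuclideanSpace ℝ (Fin n) →L[ℝ] ℝ) (a : EuclideanSpace ℝ (Fin n)) :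
    T a = ∑ j, a j * T (EuclideanSpace.single j 1) := by
  conv_lhs => rw [euclid_decomp a]
  rw [map_sum]
  simp [smul_eq_mul]

lemma norm_grad_eq (b : EuclideanSpace ℝ (Fin n) → ℝ) :
    (fun y => ‖gradient b y‖)
      = fun y => Real.sqrt (∑ i, (fderiv ℝ b y (EuclideanSpace.single i 1))^2) := by
  funext y
  rw [EuclideanSpace.norm_eq]
  congr 1
  refine Finset.sum_congr rfl fun i _ => ?_
  rw [← grad_pair, EuclideanSpace.inner_single_right]
  simp [Real.norm_eq_abs, sq_abs]

lemma grad_norm_grad {Ω : Set (EuclideanSpace ℝ (Fin n))} (hΩ : IsOpen Ω)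
    {b : EuclideanSpace ℝ (Fin n) → ℝ} (hb : ContDiffOn ℝ (⊤ : ℕ∞) b Ω)
    {x : EuclideanSpace ℝ (Fin n)} (hx : x ∈ Ω) (hgne : gradient b x ≠ 0)
    (z : EuclideanSpace ℝ (Fin n)) :
    ⟪gradient (fun y => ‖gradient b y‖) x, z⟫
      = ‖gradient b x‖⁻¹ * hess b x z (gradient b x) := by
  have hxn : Ω ∈ nhds x := hΩ.mem_nhds hx
  have hbx : ContDiffAt ℝ (⊤ : ℕ∞) b x := hb.contDiffAt hxn
  have hfd : ContDiffAt ℝ (⊤ : ℕ∞) (fderiv ℝ b) x := hbx.fderiv_right (by simp)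
  have hF2 : HasFDerivAt (fderiv ℝ b) (fderiv ℝ (fderiv ℝ b) x) x :=
    (hfd.differentiableAt (by simp)).hasFDerivAt
  set F2 := fderiv ℝ (fderiv ℝ b) x with hF2def
  set g := gradient b x with hg
  set r := ‖g‖ with hr
  have hrpos : 0 < r := norm_pos_iff.2 hgne
  set e : Fin n → EuclideanSpace ℝ (Fin n) := fun i => EuclideanSpace.single i 1 with he
  set c : Fin n → EuclideanSpace ℝ (Fin n) → ℝ := fun i y => fderiv ℝ b y (e i) with hc
  set dc : Fin n → EuclideanSpace ℝ (Fin n) →L[ℝ] ℝ :=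
    fun i => (ContinuousLinearMap.apply ℝ ℝ (e i)).comp F2 with hdc
  have hci : ∀ i, HasFDerivAt (c i) (dc i) x := fun i =>
    ((ContinuousLinearMap.apply ℝ ℝ (e i)).hasFDerivAt).comp x hF2
  have hcisq : ∀ i, HasFDerivAt (fun y => (c i y)^2) ((2 * c i x) • dc i) x := by
    intro i
    have h := (hci i).mul (hci i)
    have : c i x • dc i + c i x • dc i = (2 * c i x) • dc i := by
      rw [← add_smul]; ring_nf
    rw [this] at h
    rw [show (fun y => c i y ^ 2) = c i * c i from funext fun y => pow_two _]; exact h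
  have hS : HasFDerivAt (fun y => ∑ i, (c i y)^2) (∑ i, (2 * c i x) • dc i) x :=
    HasFDerivAt.fun_sum fun i _ => hcisq i
  have hgi : ∀ i, c i x = g i := by
    intro i
    rw [hc]
    simp only [← grad_pair b x (e i), he, ← hg]
    rw [← grad_pair, EuclideanSpace.inner_single_right]
    simp; rfl
  have hsx : ∑ i, (c i x)^2 = r^2 := by
    simp_rw [hgi]
    rw [hr, ← real_inner_self_eq_norm_sq, PiLp.inner_apply]
    refine Finset.sum_congr rfl fun i _ => ?_
    simp [pow_two]
  have hsqrt : HasFDerivAt (fun y => Real.sqrt (∑ i, (c i y)^2))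
      ((1 / (2 * Real.sqrt (∑ i, (c i x)^2))) • (∑ i, (2 * c i x) • dc i)) x :=
    hS.sqrt (by rw [hsx]; positivity)
  have hphi : HasFDerivAt (fun y => ‖gradient b y‖)
      ((1 / (2 * r)) • (∑ i, (2 * c i x) • dc i)) x := by
    rw [hsx, Real.sqrt_sq hrpos.le] at hsqrt
    rw [norm_grad_eq b]
    exact hsqrt
  rw [grad_pair, hphi.fderiv]
  have happ : (∑ i, (2 * c i x) • dc i) z = ∑ i, 2 * g i * (F2 z (e i)) := by
    rw [ContinuousLinearMap.sum_apply]
    refine Finset.sum_congr rfl fun i _ => ?_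
    rw [ContinuousLinearMap.smul_apply, hgi i]
    simp only [hdc, smul_eq_mul, ContinuousLinearMap.comp_apply,
      ContinuousLinearMap.apply_apply]
  rw [ContinuousLinearMap.smul_apply, happ, smul_eq_mul]
  have : (F2 z) g = ∑ j, g j * (F2 z (e j)) := clm_decomp (F2 z) g
  have h2 : ∑ i, 2 * g i * (F2 z (e i)) = 2 * (F2 z) g := by
    rw [this, Finset.mul_sum]
    exact Finset.sum_congr rfl fun i _ => by ring
  rw [h2]
  show 1 / (2 * r) * (2 * (F2 z) g) = r⁻¹ * (F2 z) g
  have hrne : r ≠ 0 := ne_of_gt hrpos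
  field_simp

lemma hess_sq {Ω : Set (EuclideanSpace ℝ (Fin n))} (hΩ : IsOpen Ω)
    {b : EuclideanSpace ℝ (Fin n) → ℝ} (hb : ContDiffOn ℝ (⊤ : ℕ∞) b Ω)
    {x : EuclideanSpace ℝ (Fin n)} (hx : x ∈ Ω) (v w : EuclideanSpace ℝ (Fin n)) :
    hess (fun y => b y ^ 2) x v w
      = 2 * b x * hess b x v w + 2 * fderiv ℝ b x v * fderiv ℝ b x w := by
  have hxn : Ω ∈ nhds x := hΩ.mem_nhds hx
  have hbx : ContDiffAt ℝ (⊤ : ℕ∞) b x := hb.contDiffAt hxn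
  have hb1 : DifferentiableAt ℝ b x := hbx.differentiableAt (by simp)
  have hfd : ContDiffAt ℝ (⊤ : ℕ∞) (fderiv ℝ b) x := hbx.fderiv_right (by simp)
  have hF2 : HasFDerivAt (fderiv ℝ b) (fderiv ℝ (fderiv ℝ b) x) x :=
    (hfd.differentiableAt (by simp)).hasFDerivAt
  have hd : ∀ᶠ y in nhds x, fderiv ℝ (fun z => b z ^ 2) y = (2 * b y) • fderiv ℝ b y := by
    filter_upwards [hxn] with y hy
    have hdy : DifferentiableAt ℝ b y :=
      (hb.contDiffAt (hΩ.mem_nhds hy)).differentiableAt (by simp)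
    have h := hdy.hasFDerivAt.mul hdy.hasFDerivAt
    have heq : (fun z => b z ^ 2) = fun z => b z * b z := funext fun z => pow_two (b z)
    rw [heq]
    rw [show (fun z => b z * b z) = b * b from rfl, h.fderiv]
    rw [← add_smul]
    congr 1
    ring
  have hkey : fderiv ℝ (fderiv ℝ (fun y => b y ^ 2)) x
      = fderiv ℝ (fun y => (2 * b y) • fderiv ℝ b y) x :=
    Filter.EventuallyEq.fderiv_eq hd
  have hc : HasFDerivAt (fun y => 2 * b y) ((2:ℝ) • fderiv ℝ b x) x :=
    hb1.hasFDerivAt.const_mul 2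
  have hsmul : HasFDerivAt (fun y => (2 * b y) • fderiv ℝ b y)
      ((2 * b x) • fderiv ℝ (fderiv ℝ b) x
        + ((2:ℝ) • fderiv ℝ b x).smulRight (fderiv ℝ b x)) x :=
    hc.smul hF2
  show fderiv ℝ (fderiv ℝ (fun y => b y ^ 2)) x v w = _
  rw [hkey, hsmul.fderiv]
  simp only [ContinuousLinearMap.add_apply, ContinuousLinearMap.smul_apply,
    ContinuousLinearMap.smulRight_apply, smul_eq_mul, hess]


lemma inner_basis (W : EuclideanSpace ℝ (Fin n)) (i : Fin n) :
    ⟪W, (EuclideanSpace.single i 1 : EuclideanSpace ℝ (Fin n))⟫ = W i := by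
  rw [EuclideanSpace.inner_single_right]; simp

lemma inner_self_sum (W : EuclideanSpace ℝ (Fin n)) : ‖W‖ ^ 2 = ∑ i, (W i) ^ 2 := by
  rw [← real_inner_self_eq_norm_sq, PiLp.inner_apply]
  refine Finset.sum_congr rfl fun i _ => ?_
  simp [RCLike.inner_apply, pow_two]

lemma inner_basis_basis (i j : Fin n) :
    ⟪(EuclideanSpace.single i 1 : EuclideanSpace ℝ (Fin n)), EuclideanSpace.single j 1⟫
      = (if i = j then (1:ℝ) else 0) := by
  rw [EuclideanSpace.inner_single_left]
  simp [EuclideanSpace.single_apply, eq_comm]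


theorem stmt_11 (hn : 2 ≤ n) (Ω : Set (EuclideanSpace ℝ (Fin n))) (hΩ : IsOpen Ω)
    (b : EuclideanSpace ℝ (Fin n) → ℝ) (hb : ContDiffOn ℝ (⊤ : ℕ∞) b Ω)
    (hbgrad : ∀ x ∈ Ω, gradient b x ≠ 0) :
    ∀ x ∈ Ω,
      ((2 * ‖gradient b x‖ ^ 2 - lap (fun y => b y ^ 2) x / n = 0) ∨
        ⟪gradient (fun y => ‖gradient b y‖) x,
          ‖gradient b x‖⁻¹ • gradient b x⟫ = 0) →
      ∑ i, ∑ j,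
          (hess (fun y => b y ^ 2) x (EuclideanSpace.single i 1)
              (EuclideanSpace.single j 1) -
            lap (fun y => b y ^ 2) x / n *
              ⟪(EuclideanSpace.single i 1 : EuclideanSpace ℝ (Fin n)),
                EuclideanSpace.single j 1⟫) ^ 2 ≥
        4 * n / (n - 1) * b x ^ 2 *
          ‖gradient (fun y => ‖gradient b y‖) x‖ ^ 2 := by
  intro x hx hcase
  classical
  have hxn : Ω ∈ nhds x := hΩ.mem_nhds hx
  have hbx : ContDiffAt ℝ (⊤ : ℕ∞) b x := hb.contDiffAt hxn
  have hb1 : DifferentiableAt ℝ b x := hbx.differentiableAt (by simp)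
  have hnR : (2:ℝ) ≤ (n:ℝ) := by exact_mod_cast hn
  have hnne : ((n:ℝ)) ≠ 0 := by linarith
  set g : EuclideanSpace ℝ (Fin n) := gradient b x with hg
  have hgne : g ≠ 0 := hbgrad x hx
  set r : ℝ := ‖g‖ with hr
  have hrpos : 0 < r := norm_pos_iff.2 hgne
  have hrne : r ≠ 0 := ne_of_gt hrpos
  set t : ℝ := lap (fun y => b y ^ 2) x with ht
  set W : EuclideanSpace ℝ (Fin n) := gradient (fun y => ‖gradient b y‖) x with hW
  have hsymb : ∀ v w, hess b x v w = hess b x w v := fun v w =>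
    hbx.isSymmSndFDerivAt (by simp; exact WithTop.coe_le_coe.2 le_top) v w
  have hb2cd : ContDiffAt ℝ (⊤ : ℕ∞) (fun y => b y ^ 2) x := hbx.pow 2
  have hsymb2 : ∀ v w, hess (fun y => b y ^ 2) x v w = hess (fun y => b y ^ 2) x w v :=
    fun v w => hb2cd.isSymmSndFDerivAt (by simp; exact WithTop.coe_le_coe.2 le_top) v w
  have hfg : ∀ z, fderiv ℝ b x z = ⟪g, z⟫ := fun z => (grad_pair b x z).symm
  have hgc : ∀ i, fderiv ℝ b x (EuclideanSpace.single i 1) = g i := by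
    intro i; rw [hfg, inner_basis]
  -- coordinates of W
  have hwcf : ∀ i : Fin n, W i = r⁻¹ * hess b x g (EuclideanSpace.single i 1) := by
    intro i
    have h1 := grad_norm_grad hΩ hb hx hgne (EuclideanSpace.single i 1)
    rw [inner_basis] at h1
    rw [hW, h1, hsymb]
  -- the unit normal
  set ν : EuclideanSpace ℝ (Fin n) := r⁻¹ • g with hν
  have hνc : ∀ j : Fin n, ν j = r⁻¹ * g j := fun j => rfl
  have hbν : ∀ i, hess b x ν (EuclideanSpace.single i 1) = W i := by
    intro i
    have hmap : fderiv ℝ (fderiv ℝ b) x ν = r⁻¹ • (fderiv ℝ (fderiv ℝ b) x g) := by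
      rw [hν, map_smul]
    show fderiv ℝ (fderiv ℝ b) x ν (EuclideanSpace.single i 1) = W i
    rw [hmap, ContinuousLinearMap.smul_apply, smul_eq_mul, hwcf i]
    rfl
  have hfν : fderiv ℝ b x ν = r := by
    rw [hfg, hν, real_inner_smul_right, real_inner_self_eq_norm_sq, ← hr]
    field_simp
  -- matrix ingredients
  have hdiag : ∀ (i : Fin n) (f : Fin n → ℝ),
      ∑ j, (if i = j then (1:ℝ) else 0) * f j = f i := by
    intro i f
    rw [Finset.sum_eq_single i]
    · simp
    · intro j _ hji; simp [Ne.symm hji]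
    · simp
  have hHv : ∀ i, ∑ j, hess (fun y => b y ^ 2) x (EuclideanSpace.single i 1)
        (EuclideanSpace.single j 1) * (r⁻¹ * g j)
      = (2 * b x) * W i + 2 * r ^ 2 * (r⁻¹ * g i) := by
    intro i
    have hdecomp : hess (fun y => b y ^ 2) x (EuclideanSpace.single i 1) ν
        = ∑ j, ν j * hess (fun y => b y ^ 2) x (EuclideanSpace.single i 1)
            (EuclideanSpace.single j 1) :=
      clm_decomp (fderiv ℝ (fderiv ℝ (fun y => b y ^ 2)) x (EuclideanSpace.single i 1)) ν
    have hstep : ∑ j, hess (fun y => b y ^ 2) x (EuclideanSpace.single i 1)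
          (EuclideanSpace.single j 1) * (r⁻¹ * g j)
        = hess (fun y => b y ^ 2) x (EuclideanSpace.single i 1) ν := by
      rw [hdecomp]
      exact Finset.sum_congr rfl fun j _ => by rw [hνc j]; ring
    rw [hstep, hsymb2, hess_sq hΩ hb hx, hbν i, hfν, hgc i]
    field_simp
  -- hypotheses of alg_main
  set B : Fin n → Fin n → ℝ := fun i j =>
    hess (fun y => b y ^ 2) x (EuclideanSpace.single i 1) (EuclideanSpace.single j 1)
      - t / (n:ℝ) * (if i = j then 1 else 0) with hB
  have hsymB : ∀ i j, B i j = B j i := by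
    intro i j
    rw [hB]
    dsimp only
    rw [hsymb2]
    congr 2
    by_cases h : i = j <;> simp [h, eq_comm]
  have htrB : ∑ i, B i i = 0 := by
    rw [hB]
    dsimp only
    rw [Finset.sum_sub_distrib]
    have h1 : ∑ i : Fin n, hess (fun y => b y ^ 2) x (EuclideanSpace.single i 1)
        (EuclideanSpace.single i 1) = t := rfl
    rw [h1]
    simp [Finset.sum_const, Finset.card_univ, hnne]
    field_simp; ring
  have hv1 : ∑ i : Fin n, (r⁻¹ * g i) ^ 2 = 1 := by
    have h1 : ∑ i : Fin n, (r⁻¹ * g i) ^ 2 = r⁻¹ ^ 2 * ∑ i, (g i) ^ 2 := by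
      rw [Finset.mul_sum]; exact Finset.sum_congr rfl fun i _ => by ring
    rw [h1, ← inner_self_sum g, ← hr]
    field_simp
  have hBv : ∀ i, ∑ j, B i j * (r⁻¹ * g j)
      = (2 * b x) * W i + (2 * r ^ 2 - t / (n:ℝ)) * (r⁻¹ * g i) := by
    intro i
    rw [hB]
    dsimp only
    have h1 : ∑ j, (hess (fun y => b y ^ 2) x (EuclideanSpace.single i 1)
          (EuclideanSpace.single j 1) - t / (n:ℝ) * (if i = j then 1 else 0)) * (r⁻¹ * g j)
        = (∑ j, hess (fun y => b y ^ 2) x (EuclideanSpace.single i 1)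
            (EuclideanSpace.single j 1) * (r⁻¹ * g j))
          - (t / (n:ℝ)) * ∑ j, (if i = j then (1:ℝ) else 0) * (r⁻¹ * g j) := by
      rw [Finset.mul_sum, ← Finset.sum_sub_distrib]
      exact Finset.sum_congr rfl fun j _ => by ring
    rw [h1, hHv i, hdiag i]
    ring
  have hcase' : (2 * r ^ 2 - t / (n:ℝ)) = 0 ∨ ∑ i : Fin n, W i * (r⁻¹ * g i) = 0 := by
    rcases hcase with h | h
    · exact Or.inl h
    · right
      have : ⟪W, ν⟫ = ∑ i : Fin n, W i * (r⁻¹ * g i) := by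
        rw [PiLp.inner_apply]
        exact Finset.sum_congr rfl fun i _ => by
          simp [RCLike.inner_apply, hνc i]; ring
      rw [← this]
      exact h
  have main := alg_main hn B (fun i => r⁻¹ * g i) (fun i => W i) (2 * b x)
    (2 * r ^ 2 - t / (n:ℝ)) hsymB htrB hv1 hBv hcase'
  -- convert to the goal
  have hLHS : ∑ i, ∑ j,
      (hess (fun y => b y ^ 2) x (EuclideanSpace.single i 1) (EuclideanSpace.single j 1)
        - t / (n:ℝ) * ⟪(EuclideanSpace.single i 1 : EuclideanSpace ℝ (Fin n)),
            EuclideanSpace.single j 1⟫) ^ 2 = ∑ i, ∑ j, (B i j) ^ 2 := by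
    refine Finset.sum_congr rfl fun i _ => Finset.sum_congr rfl fun j _ => ?_
    rw [inner_basis_basis, hB]
  rw [hLHS]
  have hRHS : 4 * (n:ℝ) / ((n:ℝ) - 1) * b x ^ 2 * ‖W‖ ^ 2
      = ((n:ℝ) / ((n:ℝ) - 1)) * (2 * b x) ^ 2 * ∑ i : Fin n, ((fun i : Fin n => W i) i) ^ 2 := by
    rw [inner_self_sum W]
    ring
  rw [hRHS]
  exact main
end

section
/- Let n ≥ 3 be an integer and let φ, f : (0,∞) → ℝ be smooth functions with φ > 0 such that for every r > 0 the function s ↦ e^{f(s)}·φ(s)^{1−n} is integrable on (r, ∞); set G(r) = ∫_r^∞ e^{f(s)}·φ(s)^{1−n} ds. If f'(r) → −1 and φ'(r)/φ(r) → 0 as r → ∞, then the function r ↦ n(n−1)·( G'(r)/((2−n)G(r)) + f'(r)/n − φ'(r)/φ(r) )² − (2/(n−2))·f'(r)·G'(r)/G(r) + f'(r)²/n converges, as r → ∞, to (4n − n²)/(n(n−2)²); in particular this limit is positive when n = 3 and negative when n ≥ 5, so the function is eventually positive when n = 3 and eventually negative when n ≥ 5. -/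
open Real Set Filter MeasureTheory


lemma exp_aux (c r : ℝ) (hc : c < 0) :
    IntegrableOn (fun s => Real.exp (c * (s - r))) (Ioi r) ∧
    (∫ s in Ioi r, Real.exp (c * (s - r))) = -1 / c := by
  have hc0 : c ≠ 0 := ne_of_lt hc
  have hInt : IntegrableOn (fun s => Real.exp (c * (s - r))) (Ioi r) := by
    have h := (exp_neg_integrableOn_Ioi r (neg_pos.mpr hc)).const_mul (Real.exp (-(c * r)))
    refine IntegrableOn.congr_fun h (fun x hx => ?_) measurableSet_Ioi
    rw [← Real.exp_add]; ring_nf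
  have hderiv : ∀ x ∈ Ici r, HasDerivAt (fun s => Real.exp (c * (s - r)) / c)
      (Real.exp (c * (x - r))) x := by
    intro x _
    have h1 : HasDerivAt (fun s : ℝ => c * (s - r)) c x := by
      simpa using ((hasDerivAt_id x).sub_const r).const_mul c
    have := h1.exp.div_const c
    simpa [mul_div_assoc, mul_div_cancel_right₀ _ hc0] using this
  have hlim : Tendsto (fun s => Real.exp (c * (s - r)) / c) atTop (nhds 0) := by
    have h2 : Tendsto (fun s : ℝ => c * (s - r)) atTop atBot := by
      have := (tendsto_atTop_add_const_right atTop (-r) tendsto_id).atTop_mul_const_of_neg hc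
      simpa [mul_comm, sub_eq_add_neg] using this
    have h3 : Tendsto (fun s => Real.exp (c * (s - r))) atTop (nhds 0) :=
      Real.tendsto_exp_atBot.comp h2
    simpa using h3.div_const c
  have key := integral_Ioi_of_hasDerivAt_of_tendsto' hderiv hInt hlim
  refine ⟨hInt, ?_⟩
  rw [key]; simp [hc0]; ring

lemma ratio_aux (n : ℕ) (hn : 3 ≤ n) (φ f : ℝ → ℝ)
    (hφ : ContDiffOn ℝ (⊤ : ℕ∞) φ (Ioi 0)) (hf : ContDiffOn ℝ (⊤ : ℕ∞) f (Ioi 0))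
    (hφpos : ∀ r ∈ Ioi (0 : ℝ), 0 < φ r)
    (hint : ∀ r > (0 : ℝ),
        IntegrableOn (fun s => exp (f s) * φ s ^ (1 - (n : ℝ))) (Ioi r))
    (G : ℝ → ℝ)
    (hG : ∀ r, G r = ∫ s in Ioi r, exp (f s) * φ s ^ (1 - (n : ℝ)))
    (hf' : Tendsto (deriv f) atTop (nhds (-1)))
    (hφ' : Tendsto (fun r => deriv φ r / φ r) atTop (nhds 0)) :
    Tendsto (fun r => deriv G r / G r) atTop (nhds (-1)) := by
  set h : ℝ → ℝ := fun s => exp (f s) * φ s ^ (1 - (n : ℝ)) with hhdef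
  set L : ℝ → ℝ := fun s => f s + Real.log (φ s) * (1 - (n : ℝ)) with hLdef
  have hhL : ∀ s, 0 < s → h s = Real.exp (L s) := by
    intro s hs
    have hp := hφpos s hs
    simp only [hhdef, hLdef]
    rw [Real.rpow_def_of_pos hp, ← Real.exp_add]
  have hcontOn : ContinuousOn h (Ioi 0) := by
    apply ContinuousOn.mul
    · exact (hf.continuousOn.rexp)
    · exact hφ.continuousOn.rpow_const (fun x hx => Or.inl (ne_of_gt (hφpos x hx)))
  have hD : ∀ s, 0 < s → HasDerivAt L
      (deriv f s + (deriv φ s / φ s) * (1 - (n : ℝ))) s := by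
    intro s hs
    have hsm : Ioi (0:ℝ) ∈ nhds s := isOpen_Ioi.mem_nhds hs
    have hdf : HasDerivAt f (deriv f s) s :=
      (((hf.contDiffAt hsm).differentiableAt (by simp))).hasDerivAt
    have hdφ : HasDerivAt φ (deriv φ s) s :=
      (((hφ.contDiffAt hsm).differentiableAt (by simp))).hasDerivAt
    have hlog : HasDerivAt (fun x => Real.log (φ x)) (deriv φ s / φ s) s :=
      hdφ.log (ne_of_gt (hφpos s hs))
    exact hdf.add (hlog.mul_const _)
  have hDtend : Tendsto (fun s => deriv f s + (deriv φ s / φ s) * (1 - (n : ℝ)) + 1)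
      atTop (nhds 0) := by
    have := (hf'.add (hφ'.mul_const (1 - (n : ℝ)))).add_const 1
    simpa using this
  rw [Metric.tendsto_atTop]
  intro ε hε
  set δ : ℝ := min (ε / 4) 4⁻¹ with hδdef
  have hδpos : 0 < δ := lt_min (by linarith) (by norm_num)
  have hδ4 : δ ≤ 4⁻¹ := min_le_right _ _
  have hδε : δ < ε := lt_of_le_of_lt (min_le_left _ _) (by linarith)
  obtain ⟨R, hR⟩ := (Metric.tendsto_atTop.mp hDtend δ hδpos)
  set N : ℝ := max R 1 with hNdef
  refine ⟨N, fun r hr => ?_⟩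
  have hrpos : (0:ℝ) < r := lt_of_lt_of_le one_pos (le_trans (le_max_right _ _) hr)
  -- mean value estimate on Ici N
  have hMV : ∀ x ∈ Ici N, ∀ y ∈ Ici N,
      |(L y + y) - (L x + x)| ≤ δ * |y - x| := by
    intro x hx y hy
    have key := Convex.norm_image_sub_le_of_norm_hasDerivWithin_le
      (f := fun x => L x + x)
      (f' := fun x => deriv f x + (deriv φ x / φ x) * (1 - (n : ℝ)) + 1)
      (C := δ) (s := Ici N)
      (fun z hz => by
        have hz0 : (0:ℝ) < z := lt_of_lt_of_le one_pos (le_trans (le_max_right _ _) hz)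
        exact ((hD z hz0).add (hasDerivAt_id z)).hasDerivWithinAt)
      (fun z hz => by
        have hzR : R ≤ z := le_trans (le_max_left _ _) hz
        have := hR z hzR
        rw [Real.dist_eq, sub_zero] at this
        exact le_of_lt this)
      (convex_Ici N) hx hy
    simpa [Real.norm_eq_abs] using key
  have hrN : r ∈ Ici N := hr
  have hLbound : ∀ s, r ≤ s →
      L r + (-(1 + δ)) * (s - r) ≤ L s ∧ L s ≤ L r + (δ - 1) * (s - r) := by
    intro s hs
    have hsN : s ∈ Ici N := le_trans hr hs
    have := hMV r hrN s hsN
    rw [abs_le] at this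
    have habs : |s - r| = s - r := abs_of_nonneg (by linarith)
    rw [habs] at this
    constructor <;> nlinarith [this.1, this.2]
  -- integral bounds
  have hδ1 : δ - 1 < 0 := by linarith [hδ4]; 
  have hδ2 : -(1 + δ) < 0 := by linarith
  have hG' : G r = ∫ s in Ioi r, h s := hG r
  have hIh : IntegrableOn h (Ioi r) := hint r hrpos
  have hIu := (exp_aux (δ - 1) r hδ1).1.const_mul (Real.exp (L r))
  have hIl := (exp_aux (-(1 + δ)) r hδ2).1.const_mul (Real.exp (L r))
  have hupper : G r ≤ Real.exp (L r) / (1 - δ) := by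
    have hmono : ∫ s in Ioi r, h s ≤
        ∫ s in Ioi r, Real.exp (L r) * Real.exp ((δ - 1) * (s - r)) := by
      refine setIntegral_mono_on hIh hIu measurableSet_Ioi (fun s hs => ?_)
      have hs' : r < s := hs
      rw [hhL s (lt_trans hrpos hs'), ← Real.exp_add]
      exact Real.exp_le_exp.mpr (hLbound s hs'.le).2
    rw [hG']
    calc ∫ s in Ioi r, h s ≤ _ := hmono
      _ = Real.exp (L r) * (-1 / (δ - 1)) := by
          rw [integral_const_mul, (exp_aux (δ - 1) r hδ1).2]
      _ = Real.exp (L r) / (1 - δ) := by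
          rw [show δ - 1 = -(1 - δ) by ring, div_neg, neg_div, neg_neg, mul_one_div]
  have hlower : Real.exp (L r) / (1 + δ) ≤ G r := by
    have hmono : ∫ s in Ioi r, Real.exp (L r) * Real.exp ((-(1 + δ)) * (s - r)) ≤
        ∫ s in Ioi r, h s := by
      refine setIntegral_mono_on hIl hIh measurableSet_Ioi (fun s hs => ?_)
      have hs' : r < s := hs
      rw [hhL s (lt_trans hrpos hs'), ← Real.exp_add]
      exact Real.exp_le_exp.mpr (hLbound s hs'.le).1
    rw [hG']
    calc Real.exp (L r) / (1 + δ)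
        = Real.exp (L r) * (-1 / (-(1 + δ))) := by rw [neg_div_neg_eq, mul_one_div]
      _ = ∫ s in Ioi r, Real.exp (L r) * Real.exp ((-(1 + δ)) * (s - r)) := by
          rw [integral_const_mul, (exp_aux (-(1 + δ)) r hδ2).2]
      _ ≤ _ := hmono
  have hGpos : 0 < G r := lt_of_lt_of_le (by positivity) hlower
  -- derivative of G
  have hderivG : deriv G r = -(h r) := by
    have ha : (0:ℝ) < 1/2 := by norm_num
    have hr1 : (1:ℝ) ≤ r := le_trans (le_max_right _ _) hr
    have har : (1:ℝ)/2 < r := by linarith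
    have hsplit : ∀ x ∈ Ioi (1/2 : ℝ), G x = G (1/2) - ∫ t in (1/2 : ℝ)..x, h t := by
      intro x hx
      have hx2 : (1:ℝ)/2 < x := hx
      have hu := setIntegral_union (Set.Ioc_disjoint_Ioi le_rfl) measurableSet_Ioi
        ((hint (1/2) ha).mono_set Set.Ioc_subset_Ioi_self)
        (hint x (lt_trans ha hx2)) (f := h) (μ := volume)
      rw [Set.Ioc_union_Ioi_eq_Ioi hx2.le] at hu
      rw [hG x, hG (1/2), intervalIntegral.integral_of_le hx2.le, hu]
      simp [MeasureTheory.integral_Ioc_eq_integral_Ioo]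
    have hii : IntervalIntegrable h volume (1/2) r := by
      rw [intervalIntegrable_iff_integrableOn_Ioc_of_le har.le]
      exact (hint (1/2) ha).mono_set Set.Ioc_subset_Ioi_self
    have hmeas : StronglyMeasurableAtFilter h (nhds r) :=
      hcontOn.stronglyMeasurableAtFilter isOpen_Ioi r hrpos
    have hcont : ContinuousAt h r := hcontOn.continuousAt (isOpen_Ioi.mem_nhds hrpos)
    have hF : HasDerivAt (fun x => G (1/2) - ∫ t in (1/2 : ℝ)..x, h t) (-(h r)) r :=
      (intervalIntegral.integral_hasDerivAt_right hii hmeas hcont).const_sub _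
    have hev : G =ᶠ[nhds r] (fun x => G (1/2) - ∫ t in (1/2 : ℝ)..x, h t) :=
      eventually_of_mem (isOpen_Ioi.mem_nhds (show r ∈ Ioi (1/2:ℝ) from har)) hsplit
    exact ((hF.congr_of_eventuallyEq hev).deriv)
  -- conclusion
  have hhr : h r = Real.exp (L r) := hhL r hrpos
  rw [Real.dist_eq, hderivG, hhr]
  have he : 0 < Real.exp (L r) := Real.exp_pos _
  have h1δ : 0 < 1 - δ := by linarith
  have hub' := (le_div_iff₀ h1δ).mp hupper
  have hlb' := (div_le_iff₀ (by linarith : (0:ℝ) < 1 + δ)).mp hlower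
  have habs : |(-Real.exp (L r)) / G r - (-1)| ≤ δ := by
    have heq : (-Real.exp (L r)) / G r - (-1) = (G r - Real.exp (L r)) / G r := by
      field_simp; ring
    rw [heq, abs_div, abs_of_pos hGpos, div_le_iff₀ hGpos]
    exact abs_le.mpr ⟨by nlinarith, by nlinarith⟩
  linarith

theorem stmt_15' (n : ℕ) (hn : 3 ≤ n) (φ f : ℝ → ℝ)
    (hφ : ContDiffOn ℝ (⊤ : ℕ∞) φ (Ioi 0)) (hf : ContDiffOn ℝ (⊤ : ℕ∞) f (Ioi 0))
    (hφpos : ∀ r ∈ Ioi (0 : ℝ), 0 < φ r)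
    (hint : ∀ r > (0 : ℝ),
        IntegrableOn (fun s => exp (f s) * φ s ^ (1 - (n : ℝ))) (Ioi r))
    (G : ℝ → ℝ)
    (hG : ∀ r, G r = ∫ s in Ioi r, exp (f s) * φ s ^ (1 - (n : ℝ)))
    (hf' : Tendsto (deriv f) atTop (nhds (-1)))
    (hφ' : Tendsto (fun r => deriv φ r / φ r) atTop (nhds 0)) :
    Tendsto
      (fun r => n * (n - 1) *
          (deriv G r / ((2 - n) * G r) + deriv f r / n - deriv φ r / φ r) ^ 2 -
        2 / (n - 2) * deriv f r * (deriv G r / G r) + (deriv f r) ^ 2 / n)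
      atTop (nhds ((4 * (n : ℝ) - (n : ℝ) ^ 2) / ((n : ℝ) * ((n : ℝ) - 2) ^ 2))) ∧
    (n = 3 → ∀ᶠ r in atTop,
        0 < n * (n - 1) *
            (deriv G r / ((2 - n) * G r) + deriv f r / n - deriv φ r / φ r) ^ 2 -
          2 / (n - 2) * deriv f r * (deriv G r / G r) + (deriv f r) ^ 2 / n) ∧
    (5 ≤ n → ∀ᶠ r in atTop,
        n * (n - 1) *
            (deriv G r / ((2 - n) * G r) + deriv f r / n - deriv φ r / φ r) ^ 2 -
          2 / (n - 2) * deriv f r * (deriv G r / G r) + (deriv f r) ^ 2 / n < 0) := by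
  have hn3 : (3:ℝ) ≤ (n:ℝ) := by exact_mod_cast hn
  have hn0 : (n:ℝ) ≠ 0 := by linarith
  have hn2 : (n:ℝ) - 2 ≠ 0 := by linarith
  have h2n : (2:ℝ) - (n:ℝ) ≠ 0 := by linarith
  have hA := ratio_aux n hn φ f hφ hf hφpos hint G hG hf' hφ'
  have h1 : Tendsto (fun r => deriv G r / ((2 - (n:ℝ)) * G r)) atTop
      (nhds ((-1) / (2 - (n:ℝ)))) := by
    have heq : ∀ r, (deriv G r / G r) / (2 - (n:ℝ)) = deriv G r / ((2 - (n:ℝ)) * G r) :=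
      fun r => by rw [div_div, mul_comm]
    exact (hA.div_const _).congr heq
  have hX := (h1.add (hf'.div_const (n:ℝ))).sub hφ'
  have hT := (((hX.pow 2).const_mul ((n:ℝ) * ((n:ℝ) - 1))).sub
      ((hf'.const_mul (2 / ((n:ℝ) - 2))).mul hA)).add ((hf'.pow 2).div_const (n:ℝ))
  have hVeq : (n:ℝ) * ((n:ℝ) - 1) * ((-1) / (2 - (n:ℝ)) + (-1) / (n:ℝ) - 0) ^ 2 -
      2 / ((n:ℝ) - 2) * (-1) * (-1) + (-1) ^ 2 / (n:ℝ) =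
      (4 * (n : ℝ) - (n : ℝ) ^ 2) / ((n : ℝ) * ((n : ℝ) - 2) ^ 2) := by
    field_simp
    ring
  rw [hVeq] at hT
  refine ⟨hT, fun h3 => ?_, fun h5 => ?_⟩
  · refine hT.eventually (eventually_gt_nhds ?_)
    subst h3
    norm_num
  · refine hT.eventually (eventually_lt_nhds ?_)
    have hn5 : (5:ℝ) ≤ (n:ℝ) := by exact_mod_cast h5
    apply div_neg_of_neg_of_pos
    · nlinarith
    · nlinarith

/-- On a rotationally symmetric steady soliton model, with
`G(r) = ∫_r^∞ e^{f(s)} φ(s)^{1−n} ds`, if `f' → −1` and `φ'/φ → 0` at infinity, then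
`n(n−1)(G'/((2−n)G) + f'/n − φ'/φ)² − (2/(n−2))·f'·G'/G + (f')²/n` tends to
`(4n − n²)/(n(n−2)²)`; in particular it is eventually positive for `n = 3` and
eventually negative for `n ≥ 5`. -/
theorem stmt_15 (n : ℕ) (hn : 3 ≤ n) (φ f : ℝ → ℝ)
    (hφ : ContDiffOn ℝ (⊤ : ℕ∞) φ (Ioi 0)) (hf : ContDiffOn ℝ (⊤ : ℕ∞) f (Ioi 0))
    (hφpos : ∀ r ∈ Ioi (0 : ℝ), 0 < φ r)
    (hint : ∀ r > (0 : ℝ),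
        IntegrableOn (fun s => exp (f s) * φ s ^ (1 - (n : ℝ))) (Ioi r))
    (G : ℝ → ℝ)
    (hG : ∀ r, G r = ∫ s in Ioi r, exp (f s) * φ s ^ (1 - (n : ℝ)))
    (hf' : Tendsto (deriv f) atTop (nhds (-1)))
    (hφ' : Tendsto (fun r => deriv φ r / φ r) atTop (nhds 0)) :
    Tendsto
      (fun r => n * (n - 1) *
          (deriv G r / ((2 - n) * G r) + deriv f r / n - deriv φ r / φ r) ^ 2 -
        2 / (n - 2) * deriv f r * (deriv G r / G r) + (deriv f r) ^ 2 / n)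
      atTop (nhds ((4 * (n : ℝ) - (n : ℝ) ^ 2) / ((n : ℝ) * ((n : ℝ) - 2) ^ 2))) ∧
    (n = 3 → ∀ᶠ r in atTop,
        0 < n * (n - 1) *
            (deriv G r / ((2 - n) * G r) + deriv f r / n - deriv φ r / φ r) ^ 2 -
          2 / (n - 2) * deriv f r * (deriv G r / G r) + (deriv f r) ^ 2 / n) ∧
    (5 ≤ n → ∀ᶠ r in atTop,
        n * (n - 1) *
            (deriv G r / ((2 - n) * G r) + deriv f r / n - deriv φ r / φ r) ^ 2 -
          2 / (n - 2) * deriv f r * (deriv G r / G r) + (deriv f r) ^ 2 / n < 0) := by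
  exact stmt_15' n hn φ f hφ hf hφpos hint G hG hf' hφ'
end
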